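/- arXiv:2108.13227 — 8 statements merged into one kernel-verified Lean document; each statement's English description precedes it below -/
import Mathlib

section
/- For any finite poset P and any element p ∈ P, the signed toggleability statistic T_p is 0-mesic under rowmotion: for every rowmotion orbit O ⊆ J(P), the sum over I ∈ O of T_p(I) equals 0. -/
open scoped Classical
open Finset

variable {P : Type*} [Fintype P] [PartialOrder P]

/-- `I` is an order ideal (downward-closed subset) of the finite poset `P`. -/
def IsIdeal (I : Finset P) : Prop := ∀ ⦃x y : P⦄, x ≤ y → y ∈ I → x ∈ I

/-- `p` is a minimal element of the complement `P \ I`. -/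
def CanTogIn (I : Finset P) (p : P) : Prop := p ∉ I ∧ ∀ q, q < p → q ∈ I

/-- `p` is a maximal element of `I`. -/
def CanTogOut (I : Finset P) (p : P) : Prop := p ∈ I ∧ ∀ q, p < q → q ∉ I

/-- Rowmotion: the order ideal generated by the minimal elements of `P \ I`. -/
noncomputable def rowmotion (I : Finset P) : Finset P :=
  univ.filter fun x => ∃ y, CanTogIn I y ∧ x ≤ y

/-- Toggleability statistic `T⁺_p`. -/
noncomputable def Tin (p : P) (I : Finset P) : ℝ := if CanTogIn I p then 1 else 0

/-- Toggleability statistic `T⁻_p`. -/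
noncomputable def Tout (p : P) (I : Finset P) : ℝ := if CanTogOut I p then 1 else 0

/-- Signed toggleability statistic `T_p = T⁺_p - T⁻_p`. -/
noncomputable def Tsgn (p : P) (I : Finset P) : ℝ := Tin p I - Tout p I


lemma mem_rowmotion_iff (I : Finset P) (x : P) :
    x ∈ rowmotion I ↔ ∃ y, CanTogIn I y ∧ x ≤ y := by
  simp [rowmotion]

lemma canTogIn_iff_canTogOut_rowmotion (p : P) (I : Finset P) :
    CanTogIn I p ↔ CanTogOut (rowmotion I) p := by
  constructor
  · rintro ⟨hpI, hmin⟩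
    refine ⟨(mem_rowmotion_iff I p).2 ⟨p, ⟨hpI, hmin⟩, le_rfl⟩, ?_⟩
    intro q hq hqmem
    obtain ⟨y, ⟨hyI, hymin⟩, hqy⟩ := (mem_rowmotion_iff I q).1 hqmem
    exact hpI (hymin p (lt_of_lt_of_le hq hqy))
  · rintro ⟨hpmem, hmax⟩
    obtain ⟨y, hy, hpy⟩ := (mem_rowmotion_iff I p).1 hpmem
    rcases eq_or_lt_of_le hpy with rfl | hlt
    · exact hy
    · exact absurd ((mem_rowmotion_iff I y).2 ⟨y, hy, le_rfl⟩) (hmax y hlt)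

lemma Tin_eq_Tout_rowmotion (p : P) (I : Finset P) :
    Tin p I = Tout p (rowmotion I) := by
  unfold Tin Tout
  simp [canTogIn_iff_canTogOut_rowmotion]

/-- Striker's lemma: for every `p ∈ P`, the signed toggleability statistic `T_p`
is 0-mesic under rowmotion: it sums to zero along every rowmotion orbit. -/
theorem Tsgn_zero_mesic (p : P) (I : Finset P) (hI : IsIdeal I)
    (N : ℕ) (hN : 0 < N) (hper : rowmotion^[N] I = I) :
    ∑ k ∈ Finset.range N, Tsgn p (rowmotion^[k] I) = 0 := by
  have key : ∀ k, Tsgn p (rowmotion^[k] I) =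
      Tout p (rowmotion^[k+1] I) - Tout p (rowmotion^[k] I) := by
    intro k
    rw [Function.iterate_succ_apply']
    unfold Tsgn
    rw [Tin_eq_Tout_rowmotion]
  calc ∑ k ∈ Finset.range N, Tsgn p (rowmotion^[k] I)
      = ∑ k ∈ Finset.range N,
        (Tout p (rowmotion^[k+1] I) - Tout p (rowmotion^[k] I)) := by
        exact Finset.sum_congr rfl fun k _ => key k
    _ = Tout p (rowmotion^[N] I) - Tout p (rowmotion^[0] I) :=
        Finset.sum_range_sub (fun k => Tout p (rowmotion^[k] I)) N
    _ = 0 := by rw [hper]; simp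
end

section
/- For any finite poset P, if a real-valued statistic f on J(P) can be written as f = c + Σ_{p∈P} c_p · T_p for real constants c and c_p, then f is c-mesic under rowmotion: the average of f over every rowmotion orbit equals c. -/
open scoped Classical
open Finset

variable {P : Type*} [Fintype P] [PartialOrder P]

lemma rowmotion_isIdeal (I : Finset P) : IsIdeal (rowmotion I) := by
  intro x y hxy hy
  simp only [rowmotion, mem_filter, mem_univ, true_and] at hy ⊢
  obtain ⟨z, hz, hyz⟩ := hy
  exact ⟨z, hz, hxy.trans hyz⟩

lemma canTogOut_rowmotion (I : Finset P) (p : P) :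
    CanTogOut (rowmotion I) p ↔ CanTogIn I p := by
  simp only [CanTogOut, rowmotion, mem_filter, mem_univ, true_and]
  constructor
  · rintro ⟨⟨y, hy, hpy⟩, hmax⟩
    rcases eq_or_lt_of_le hpy with rfl | hlt
    · exact hy
    · exact absurd ⟨y, hy, le_refl y⟩ (hmax y hlt)
  · rintro ⟨hpI, hbelow⟩
    refine ⟨⟨p, ⟨hpI, hbelow⟩, le_refl p⟩, ?_⟩
    rintro q hpq ⟨y, ⟨hyI, hyb⟩, hqy⟩
    exact hpI (hyb p (lt_of_lt_of_le hpq hqy))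

lemma tout_rowmotion (I : Finset P) (p : P) : Tout p (rowmotion I) = Tin p I := by
  simp [Tout, Tin, canTogOut_rowmotion]

/-- If `f = c + ∑_p c_p T_p` on order ideals, then `f` is `c`-mesic under rowmotion. -/
theorem homomesy_of_toggleability_combination (f : Finset P → ℝ) (c : ℝ) (cp : P → ℝ)
    (hf : ∀ I : Finset P, IsIdeal I → f I = c + ∑ p : P, cp p * Tsgn p I)
    (I : Finset P) (hI : IsIdeal I)
    (N : ℕ) (hN : 0 < N) (hper : rowmotion^[N] I = I) :
    ∑ k ∈ Finset.range N, f (rowmotion^[k] I) = N * c := by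
  have hideal : ∀ k, IsIdeal (rowmotion^[k] I) := by
    intro k
    cases k with
    | zero => exact hI
    | succ n => rw [Function.iterate_succ_apply']; exact rowmotion_isIdeal _
  have key : ∀ p : P, ∑ k ∈ Finset.range N, Tsgn p (rowmotion^[k] I) = 0 := by
    intro p
    have hshift : ∀ k, Tin p (rowmotion^[k] I) = Tout p (rowmotion^[k + 1] I) := by
      intro k
      rw [Function.iterate_succ_apply', tout_rowmotion]
    simp only [Tsgn, Finset.sum_sub_distrib]
    rw [sub_eq_zero]
    calc ∑ k ∈ Finset.range N, Tin p (rowmotion^[k] I)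
        = ∑ k ∈ Finset.range N, Tout p (rowmotion^[k + 1] I) := by
          exact Finset.sum_congr rfl fun k _ => hshift k
      _ = ∑ k ∈ Finset.range (N + 1), Tout p (rowmotion^[k] I)
            - Tout p (rowmotion^[0] I) := by
          rw [Finset.sum_range_succ' (fun k => Tout p (rowmotion^[k] I)) N]; ring
      _ = ∑ k ∈ Finset.range N, Tout p (rowmotion^[k] I) := by
          rw [Finset.sum_range_succ, hper]; simp
  calc ∑ k ∈ Finset.range N, f (rowmotion^[k] I)
      = ∑ k ∈ Finset.range N, (c + ∑ p : P, cp p * Tsgn p (rowmotion^[k] I)) :=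
        Finset.sum_congr rfl fun k _ => hf _ (hideal k)
    _ = N * c + ∑ p : P, cp p * ∑ k ∈ Finset.range N, Tsgn p (rowmotion^[k] I) := by
        rw [Finset.sum_add_distrib, Finset.sum_const, Finset.sum_comm]
        simp [Finset.mul_sum, nsmul_eq_mul]
    _ = N * c := by simp [key]
end

section
/- Fix a real number q ≥ 0 and a finite poset P. The statistics T_p^q := T⁺_p − q·T⁻_p (for p ∈ P), viewed as real-valued functions on J(P), are linearly independent over ℝ, and moreover the constant function 1 does not lie in their span. -/
open scoped Classical
open Finset

variable {P : Type*} [Fintype P] [PartialOrder P]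

section Aux

variable {P : Type*} [Fintype P] [PartialOrder P]

lemma insert_isIdeal {I : Finset P} {p : P} (hI : IsIdeal I) (hp : CanTogIn I p) :
    IsIdeal (insert p I) := by
  intro x y hxy hy
  rcases Finset.mem_insert.1 hy with rfl | hy
  · rcases eq_or_lt_of_le hxy with rfl | hlt
    · exact Finset.mem_insert_self _ _
    · exact Finset.mem_insert_of_mem (hp.2 _ hlt)
  · exact Finset.mem_insert_of_mem (hI hxy hy)

lemma erase_isIdeal {I : Finset P} {p : P} (hI : IsIdeal I) (hp : CanTogOut I p) :
    IsIdeal (I.erase p) := by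
  intro x y hxy hy
  rcases Finset.mem_erase.1 hy with ⟨hyne, hyI⟩
  refine Finset.mem_erase.2 ⟨?_, hI hxy hyI⟩
  rintro rfl
  rcases eq_or_lt_of_le hxy with rfl | hlt
  · exact hyne rfl
  · exact hp.2 _ hlt hyI

lemma key_reformulation (q : ℝ) (d : ℝ) (c : P → ℝ)
    (h : ∀ I : Finset P, IsIdeal I → d + ∑ p : P, c p * (Tin p I - q * Tout p I) = 0)
    (I : Finset P) (hI : IsIdeal I) :
    d + ((univ.filter (CanTogIn I)).sum c - q * (univ.filter (CanTogOut I)).sum c) = 0 := by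
  have e : ∑ p : P, c p * (Tin p I - q * Tout p I)
      = ((univ.filter (CanTogIn I)).sum c - q * (univ.filter (CanTogOut I)).sum c) := by
    rw [Finset.sum_filter, Finset.sum_filter, Finset.mul_sum, ← Finset.sum_sub_distrib]
    refine Finset.sum_congr rfl fun p _ => ?_
    simp only [Tin, Tout]
    split_ifs <;> ring
  rw [← e]
  exact h I hI

lemma qTog_aux (q : ℝ) (hq : 0 ≤ q) (d : ℝ) (c : P → ℝ)
    (h : ∀ I : Finset P, IsIdeal I → d + ∑ p : P, c p * (Tin p I - q * Tout p I) = 0) :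
    0 ≤ d ∧ (d = 0 → ∀ I : Finset P, IsIdeal I → ∑ x ∈ I, c x ≤ ∑ x : P, c x) := by
  classical
  set g : Finset P → ℝ := fun I => ∑ x ∈ I, c x with hg
  have key := key_reformulation q d c h
  -- facts at any "maximizing" ideal
  have hcin : ∀ I : Finset P, IsIdeal I → (∀ J : Finset P, IsIdeal J → g J ≤ g I) →
      ∀ p, CanTogIn I p → c p ≤ 0 := by
    intro I hI hmax p hp
    have h1 : g (insert p I) ≤ g I := hmax _ (insert_isIdeal hI hp)
    have h2 : g (insert p I) = c p + g I := Finset.sum_insert hp.1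
    linarith
  have hcout : ∀ I : Finset P, IsIdeal I → (∀ J : Finset P, IsIdeal J → g J ≤ g I) →
      ∀ p, CanTogOut I p → 0 ≤ c p := by
    intro I hI hmax p hp
    have h1 : g (I.erase p) ≤ g I := hmax _ (erase_isIdeal hI hp)
    have h2 : g (I.erase p) = g I - c p := Finset.sum_erase_eq_sub hp.1
    linarith
  have hSpos : ∀ I : Finset P, IsIdeal I → (∀ J : Finset P, IsIdeal J → g J ≤ g I) →
      (univ.filter (CanTogIn I)).sum c ≤ 0 ∧ 0 ≤ (univ.filter (CanTogOut I)).sum c := by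
    intro I hI hmax
    constructor
    · exact Finset.sum_nonpos fun p hp =>
        hcin I hI hmax p (Finset.mem_filter.1 hp).2
    · exact Finset.sum_nonneg fun p hp =>
        hcout I hI hmax p (Finset.mem_filter.1 hp).2
  -- a maximizing ideal exists
  have hSne : ((univ : Finset (Finset P)).filter IsIdeal).Nonempty := by
    refine ⟨∅, Finset.mem_filter.2 ⟨Finset.mem_univ _, ?_⟩⟩
    intro x y hxy hy
    simp at hy
  obtain ⟨I₀, hI₀mem, hI₀max⟩ :=
    Finset.exists_max_image ((univ : Finset (Finset P)).filter IsIdeal) g hSne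
  have hI₀ : IsIdeal I₀ := (Finset.mem_filter.1 hI₀mem).2
  have hI₀max' : ∀ J : Finset P, IsIdeal J → g J ≤ g I₀ := fun J hJ =>
    hI₀max J (Finset.mem_filter.2 ⟨Finset.mem_univ _, hJ⟩)
  obtain ⟨hin₀, hout₀⟩ := hSpos I₀ hI₀ hI₀max'
  have hkey₀ := key I₀ hI₀
  constructor
  · nlinarith [mul_nonneg hq hout₀]
  · -- assuming d = 0
    intro hd
    -- at any maximizing ideal, togglable-in elements have c p = 0
    have hzero : ∀ I : Finset P, IsIdeal I → (∀ J : Finset P, IsIdeal J → g J ≤ g I) →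
        ∀ p, CanTogIn I p → c p = 0 := by
      intro I hI hmax p hp
      obtain ⟨hin, hout⟩ := hSpos I hI hmax
      have hk := key I hI
      have hSin0 : (univ.filter (CanTogIn I)).sum c = 0 := by
        nlinarith [mul_nonneg hq hout]
      have := (Finset.sum_eq_zero_iff_of_nonpos
        (fun r hr => hcin I hI hmax r (Finset.mem_filter.1 hr).2)).1 hSin0
      exact this p (Finset.mem_filter.2 ⟨Finset.mem_univ _, hp⟩)
    -- propagate maximality up to the full ideal
    have prop : ∀ n : ℕ, ∀ I : Finset P, IsIdeal I →
        (∀ J : Finset P, IsIdeal J → g J ≤ g I) → (univ \ I).card ≤ n →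
        g I = g (univ : Finset P) := by
      intro n
      induction n with
      | zero =>
        intro I hI hmax hcard
        have : univ \ I = ∅ := Finset.card_eq_zero.1 (Nat.le_zero.1 hcard)
        have hIu : I = univ := by
          apply Finset.eq_univ_of_forall
          intro x
          by_contra hx
          have : x ∈ univ \ I := Finset.mem_sdiff.2 ⟨Finset.mem_univ _, hx⟩
          simp [‹univ \ I = ∅›] at this
        rw [hIu]
      | succ n ih =>
        intro I hI hmax hcard
        by_cases hIu : I = univ
        · rw [hIu]
        · have hne : (univ \ I).Nonempty := by
            rw [Finset.sdiff_nonempty]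
            intro hsub
            exact hIu (Finset.univ_subset_iff.1 hsub)
          obtain ⟨p, hpmem, hpmin⟩ : ∃ p ∈ univ \ I, ∀ r ∈ univ \ I, ¬ r < p := by
            obtain ⟨p, hpm⟩ := (univ \ I).exists_minimal hne
            exact ⟨p, hpm.1, fun r hr hlt => (lt_irrefl p) (lt_of_le_of_lt (hpm.2 hr hlt.le) hlt)⟩
          have hpI : p ∉ I := (Finset.mem_sdiff.1 hpmem).2
          have hp : CanTogIn I p := by
            refine ⟨hpI, fun r hr => ?_⟩
            by_contra hrI
            exact hpmin r (Finset.mem_sdiff.2 ⟨Finset.mem_univ _, hrI⟩) hr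
          have hcp : c p = 0 := hzero I hI hmax p hp
          have hgins : g (insert p I) = g I := by
            have h' : g (insert p I) = c p + g I := Finset.sum_insert hpI
            rw [h', hcp, zero_add]
          have hmax' : ∀ J : Finset P, IsIdeal J → g J ≤ g (insert p I) := by
            intro J hJ; rw [hgins]; exact hmax J hJ
          have hcard' : (univ \ insert p I).card ≤ n := by
            have : univ \ insert p I = (univ \ I).erase p := by
              ext x
              simp [Finset.mem_sdiff, Finset.mem_erase, Finset.mem_insert]
              try tauto
            rw [this, Finset.card_erase_of_mem hpmem]
            omega
          rw [← hgins]
          exact ih (insert p I) (insert_isIdeal hI hp) hmax' hcard'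
    have huniv : g I₀ = g (univ : Finset P) :=
      prop (univ \ I₀).card I₀ hI₀ hI₀max' le_rfl
    intro I hI
    have := hI₀max' I hI
    simp only [hg] at *
    calc ∑ x ∈ I, c x ≤ ∑ x ∈ I₀, c x := this
    _ = ∑ x ∈ (univ : Finset P), c x := huniv

end Aux

/-- For `q ≥ 0`, the statistics `T_p^q = T⁺_p - q T⁻_p` on `J(P)` are linearly
independent over `ℝ`, and the constant function `1` is not in their span:
any vanishing linear combination `d·1 + ∑_p c_p T_p^q = 0` has all coefficients zero. -/
theorem qToggleability_linearIndependent (q : ℝ) (hq : 0 ≤ q) (d : ℝ) (c : P → ℝ)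
    (h : ∀ I : Finset P, IsIdeal I → d + ∑ p : P, c p * (Tin p I - q * Tout p I) = 0) :
    d = 0 ∧ ∀ p : P, c p = 0 := by
  classical
  have hneg : ∀ I : Finset P, IsIdeal I →
      (-d) + ∑ p : P, (fun p => -c p) p * (Tin p I - q * Tout p I) = 0 := by
    intro I hI
    have e : ∑ p : P, (fun p => -c p) p * (Tin p I - q * Tout p I)
        = -∑ p : P, c p * (Tin p I - q * Tout p I) := by
      rw [← Finset.sum_neg_distrib]
      exact Finset.sum_congr rfl fun p _ => by ring
    rw [e]
    have := h I hI
    linarith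
  obtain ⟨hd1, hmax1⟩ := qTog_aux q hq d c h
  obtain ⟨hd2, hmax2⟩ := qTog_aux q hq (-d) (fun p => -c p) hneg
  have hd : d = 0 := by linarith
  refine ⟨hd, fun p => ?_⟩
  have hd' : (-d) = 0 := by rw [hd]; ring
  set I : Finset P := univ.filter (fun x => x < p) with hIdef
  have hI : IsIdeal I := by
    intro x y hxy hy
    simp only [hIdef, Finset.mem_filter, Finset.mem_univ, true_and] at *
    exact lt_of_le_of_lt hxy hy
  have hp : CanTogIn I p := by
    constructor
    · simp [hIdef]
    · intro r hr; simp [hIdef, hr]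
  have hI' : IsIdeal (insert p I) := insert_isIdeal hI hp
  have h1 : ∑ x ∈ I, c x ≤ ∑ x : P, c x := hmax1 hd I hI
  have h2 : ∑ x ∈ insert p I, c x ≤ ∑ x : P, c x := hmax1 hd _ hI'
  have h3 : ∑ x ∈ I, (-c x) ≤ ∑ x : P, (-c x) := by
    have := hmax2 hd' I hI; simpa using this
  have h4 : ∑ x ∈ insert p I, (-c x) ≤ ∑ x : P, (-c x) := by
    have := hmax2 hd' _ hI'; simpa using this
  have hins : ∑ x ∈ insert p I, c x = c p + ∑ x ∈ I, c x := Finset.sum_insert hp.1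
  have h3' : ∑ x : P, c x ≤ ∑ x ∈ I, c x := by
    rw [Finset.sum_neg_distrib, Finset.sum_neg_distrib] at h3
    linarith
  have h4' : ∑ x : P, c x ≤ ∑ x ∈ insert p I, c x := by
    rw [Finset.sum_neg_distrib, Finset.sum_neg_distrib] at h4
    linarith
  linarith
end

section
/- Let P be a finite poset and q ≥ 0 a real number. For each p ∈ P, the sum over all order ideals I ∈ J(P) of q^{#(P\I)} · (T⁺_p(I) − q·T⁻_p(I)) equals 0. -/
open scoped Classical
open Finset

variable {P : Type*} [Fintype P] [PartialOrder P]

/-- For `q ≥ 0` and each `p ∈ P`, `∑_{I ∈ J(P)} q^{#(P\I)} (T⁺_p(I) - q T⁻_p(I)) = 0`. -/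
theorem sum_qWeighted_qToggleability (q : ℝ) (hq : 0 ≤ q) (p : P) :
    ∑ I ∈ Finset.univ.filter (fun I : Finset P => IsIdeal I),
      q ^ (Iᶜ.card) * (Tin p I - q * Tout p I) = 0 := by
  have hsplit : ∀ I ∈ Finset.univ.filter (fun I : Finset P => IsIdeal I),
      q ^ (Iᶜ.card) * (Tin p I - q * Tout p I)
      = (if CanTogIn I p then q ^ (Iᶜ.card) else 0)
        - (if CanTogOut I p then q ^ (Iᶜ.card) * q else 0) := by
    intro I _
    unfold Tin Tout
    by_cases h1 : CanTogIn I p <;> by_cases h2 : CanTogOut I p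
    · exact absurd h2.1 h1.1
    all_goals (simp [h1, h2]; try ring)
  rw [Finset.sum_congr rfl hsplit, Finset.sum_sub_distrib,
    ← Finset.sum_filter, ← Finset.sum_filter, Finset.filter_filter, Finset.filter_filter,
    sub_eq_zero]
  apply Finset.sum_nbij' (i := fun I => insert p I) (j := fun J => J.erase p)
  · intro I hI
    simp only [Finset.mem_filter, Finset.mem_univ, true_and] at hI ⊢
    have hid := hI.1
    have hpI := hI.2.1
    have hmin := hI.2.2
    refine ⟨?_, Finset.mem_insert_self _ _, ?_⟩
    · intro x y hxy hy
      rcases Finset.mem_insert.mp hy with rfl | hy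
      · rcases eq_or_lt_of_le hxy with rfl | hlt
        · exact Finset.mem_insert_self _ _
        · exact Finset.mem_insert_of_mem (hmin x hlt)
      · exact Finset.mem_insert_of_mem (hid hxy hy)
    · intro r hr hrI
      rcases Finset.mem_insert.mp hrI with rfl | hrI
      · exact lt_irrefl _ hr
      · exact hpI (hid hr.le hrI)
  · intro J hJ
    simp only [Finset.mem_filter, Finset.mem_univ, true_and] at hJ ⊢
    have hid := hJ.1
    have hpJ := hJ.2.1
    have hmax := hJ.2.2
    refine ⟨?_, Finset.notMem_erase _ _, ?_⟩
    · intro x y hxy hy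
      have hyJ := Finset.mem_of_mem_erase hy
      have hyp := Finset.ne_of_mem_erase hy
      refine Finset.mem_erase.mpr ⟨?_, hid hxy hyJ⟩
      rintro rfl
      exact hmax y (lt_of_le_of_ne hxy hyp.symm) hyJ
    · intro r hr
      exact Finset.mem_erase.mpr ⟨hr.ne, hid hr.le hpJ⟩
  · intro I hI
    simp only [Finset.mem_filter] at hI
    exact Finset.erase_insert hI.2.2.1
  · intro J hJ
    simp only [Finset.mem_filter] at hJ
    exact Finset.insert_erase hJ.2.2.1
  · intro I hI
    simp only [Finset.mem_filter] at hI
    have hpI : p ∉ I := hI.2.2.1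
    have hcard : Iᶜ.card = (insert p I)ᶜ.card + 1 := by
      have : (insert p I)ᶜ = Iᶜ.erase p := by
        ext x
        simp [Finset.mem_compl, Finset.mem_insert, and_comm, not_or]
      rw [this, Finset.card_erase_of_mem (Finset.mem_compl.mpr hpI)]
      have : 0 < Iᶜ.card := Finset.card_pos.mpr ⟨p, Finset.mem_compl.mpr hpI⟩
      omega
    rw [hcard, pow_succ]
end

section
/- Let P be a finite poset such that antichain rowmotion Ψ: A(P) → A(P) is well-defined, and suppose π: P → ℝ satisfies Σ_{p∈A} π(p) = Σ_{p∈Ψ(A)} π(p) for every antichain A of P. Then π(p) = 0 for all p ∈ P. -/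
open scoped Classical
open Finset

variable {P : Type*} [Fintype P] [PartialOrder P]

/-- The order ideal generated by a subset `A`. -/
noncomputable def genIdeal (A : Finset P) : Finset P :=
  univ.filter fun x => ∃ y ∈ A, x ≤ y

/-- Antichain rowmotion: the minimal elements of the complement of the
order ideal generated by `A`. -/
noncomputable def antichainRowmotion (A : Finset P) : Finset P :=
  univ.filter fun p => CanTogIn (genIdeal A) p

/-!
Take an order ideal `I` maximising `∑_{p ∈ I} π p`. Maximality gives `π ≥ 0` on the maximal
elements of `I` and `π ≤ 0` on the minimal elements of `P \ I`; the latter set is `Ψ` of the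
former, so invariance forces `π = 0` on the maximal elements of `I`. Removing one of them gives a
smaller maximiser, and descending to `∅` shows that the maximum is `0`. By symmetry in `±π`,
every order ideal has `π`-sum `0`, and `π p` is the difference of the sums over `{x ≤ p}` and
`{x < p}`.
-/

section PartialOrder

variable {α : Type*} [PartialOrder α]

lemma canTogOut_iff_maximal {I : Finset α} {p : α} : CanTogOut I p ↔ Maximal (· ∈ I) p :=
  maximal_iff_forall_gt.symm

lemma exists_canTogOut {I : Finset α} (hI : I.Nonempty) : ∃ p, CanTogOut I p :=
  (I.exists_maximal hI).imp fun _ => canTogOut_iff_maximal.2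

namespace IsIdeal

variable {I : Finset α} {p : α}

lemma erase (hI : IsIdeal I) (hp : CanTogOut I p) : IsIdeal (I.erase p) := by
  intro x y hxy hy
  rw [mem_erase] at hy ⊢
  refine ⟨?_, hI hxy hy.2⟩
  rintro rfl
  exact hp.2 y (lt_of_le_of_ne hxy (Ne.symm hy.1)) hy.2

lemma insert (hI : IsIdeal I) (hp : CanTogIn I p) : IsIdeal (insert p I) := by
  intro x y hxy hy
  rw [mem_insert] at hy ⊢
  rcases hy with rfl | hy
  · exact hxy.eq_or_lt.imp id (hp.2 x)
  · exact Or.inr (hI hxy hy)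

end IsIdeal

variable {π : α → ℝ} {I : Finset α}

lemma IsMaxOn.nonneg_of_canTogOut (hI : IsIdeal I)
    (hmax : IsMaxOn (fun J => ∑ x ∈ J, π x) {J | IsIdeal J} I) {p : α} (hp : CanTogOut I p) :
    0 ≤ π p := by
  have := isMaxOn_iff.1 hmax _ (hI.erase hp)
  rw [sum_erase_eq_sub hp.1] at this
  linarith

lemma IsMaxOn.nonpos_of_canTogIn (hI : IsIdeal I)
    (hmax : IsMaxOn (fun J => ∑ x ∈ J, π x) {J | IsIdeal J} I) {p : α} (hp : CanTogIn I p) :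
    π p ≤ 0 := by
  have := isMaxOn_iff.1 hmax _ (hI.insert hp)
  rwa [sum_insert hp.1, add_le_iff_nonpos_left] at this

end PartialOrder

lemma isIdeal_filter_lt (p : P) : IsIdeal (univ.filter (· < p)) := by
  intro x y hxy hy
  simp only [mem_filter, mem_univ, true_and] at hy ⊢
  exact hxy.trans_lt hy

lemma canTogIn_filter_lt (p : P) : CanTogIn (univ.filter (· < p)) p := by
  simp [CanTogIn]

lemma isAntichain_filter_canTogOut (I : Finset P) :
    IsAntichain (· ≤ ·) (univ.filter (CanTogOut I) : Set P) := by
  intro a ha b hb hne hab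
  simp only [coe_filter, mem_univ, true_and, Set.mem_ofPred_eq] at ha hb
  exact ha.2 b (lt_of_le_of_ne hab hne) hb.1

lemma genIdeal_filter_canTogOut {I : Finset P} (hI : IsIdeal I) :
    genIdeal (univ.filter (CanTogOut I)) = I := by
  ext x
  simp only [genIdeal, mem_filter, mem_univ, true_and]
  constructor
  · rintro ⟨y, hy, hxy⟩
    exact hI hxy hy.1
  · intro hx
    obtain ⟨y, hxy, hy⟩ := I.exists_le_maximal hx
    exact ⟨y, canTogOut_iff_maximal.2 hy, hxy⟩

lemma antichainRowmotion_filter_canTogOut {I : Finset P} (hI : IsIdeal I) :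
    antichainRowmotion (univ.filter (CanTogOut I)) = univ.filter (CanTogIn I) := by
  rw [antichainRowmotion, genIdeal_filter_canTogOut hI]

section RowmotionInvariant

variable {π : P → ℝ} {I : Finset P}

def IsRowmotionInvariant (π : P → ℝ) : Prop :=
  ∀ A : Finset P, IsAntichain (· ≤ ·) (A : Set P) →
    ∑ p ∈ A, π p = ∑ p ∈ antichainRowmotion A, π p

lemma IsRowmotionInvariant.neg (h : IsRowmotionInvariant π) : IsRowmotionInvariant (-π) :=
  fun A hA => by simp only [Pi.neg_apply, sum_neg_distrib, h A hA]

lemma IsMaxOn.eq_zero_of_canTogOut (h : IsRowmotionInvariant π)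
    (hI : IsIdeal I) (hmax : IsMaxOn (fun J => ∑ x ∈ J, π x) {J | IsIdeal J} I)
    {p : P} (hp : CanTogOut I p) : π p = 0 := by
  have hnonneg : ∀ x ∈ univ.filter (CanTogOut I), 0 ≤ π x := fun x hx =>
    hmax.nonneg_of_canTogOut hI (mem_filter.1 hx).2
  have hsum : ∑ x ∈ univ.filter (CanTogOut I), π x ≤ 0 := by
    rw [h _ (isAntichain_filter_canTogOut I), antichainRowmotion_filter_canTogOut hI]
    exact sum_nonpos fun x hx => hmax.nonpos_of_canTogIn hI (mem_filter.1 hx).2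
  exact (sum_eq_zero_iff_of_nonneg hnonneg).1 (hsum.antisymm (sum_nonneg hnonneg)) p
    (mem_filter.2 ⟨mem_univ p, hp⟩)

lemma IsMaxOn.sum_nonpos (h : IsRowmotionInvariant π)
    (hI : IsIdeal I) (hmax : IsMaxOn (fun J => ∑ x ∈ J, π x) {J | IsIdeal J} I) :
    ∑ x ∈ I, π x ≤ 0 := by
  induction I using Finset.strongInduction with
  | H I ih =>
    rcases I.eq_empty_or_nonempty with rfl | hne
    · simp
    obtain ⟨p, hp⟩ := exists_canTogOut hne
    have hsum : ∑ x ∈ I.erase p, π x = ∑ x ∈ I, π x := by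
      rw [sum_erase_eq_sub hp.1, hmax.eq_zero_of_canTogOut h hI hp, sub_zero]
    have hmax' : IsMaxOn (fun J => ∑ x ∈ J, π x) {J | IsIdeal J} (I.erase p) :=
      isMaxOn_iff.2 fun J hJ => (isMaxOn_iff.1 hmax J hJ).trans_eq hsum.symm
    exact hsum ▸ ih _ (erase_ssubset hp.1) (hI.erase hp) hmax'

lemma IsRowmotionInvariant.sum_nonpos_of_isIdeal (h : IsRowmotionInvariant π)
    (hI : IsIdeal I) : ∑ x ∈ I, π x ≤ 0 := by
  obtain ⟨I₀, hI₀, hmax⟩ := Set.exists_max_image {J : Finset P | IsIdeal J}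
    (fun J => ∑ x ∈ J, π x) (Set.toFinite _) ⟨I, hI⟩
  exact (hmax I hI).trans ((isMaxOn_iff.2 hmax).sum_nonpos h hI₀)

lemma IsRowmotionInvariant.sum_eq_zero_of_isIdeal (h : IsRowmotionInvariant π)
    (hI : IsIdeal I) : ∑ x ∈ I, π x = 0 := by
  have := h.neg.sum_nonpos_of_isIdeal hI
  simp only [Pi.neg_apply, sum_neg_distrib, neg_nonpos] at this
  exact (h.sum_nonpos_of_isIdeal hI).antisymm this

end RowmotionInvariant

/-- If `π : P → ℝ` satisfies `∑_{p∈A} π(p) = ∑_{p∈Ψ(A)} π(p)` for every antichain `A`,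
then `π` is identically zero. -/
theorem eq_zero_of_antichainRowmotion_invariant (π : P → ℝ)
    (h : ∀ A : Finset P, IsAntichain (· ≤ ·) (A : Set P) →
      ∑ p ∈ A, π p = ∑ p ∈ antichainRowmotion A, π p) :
    ∀ p : P, π p = 0 := by
  intro p
  have hinv : IsRowmotionInvariant π := h
  have hbelow := hinv.sum_eq_zero_of_isIdeal (isIdeal_filter_lt p)
  have hupto := hinv.sum_eq_zero_of_isIdeal ((isIdeal_filter_lt p).insert (canTogIn_filter_lt p))
  rwa [sum_insert (canTogIn_filter_lt p).1, hbelow, add_zero] at hupto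
end

section
/- Let P = [a]×[b] be the product of chains of sizes a and b, with elements (i,j), 1 ≤ i ≤ a, 1 ≤ j ≤ b, ordered componentwise. For every (i,j) ∈ P and every order ideal I of P, the rook statistic R_{i,j}(I) := Σ_{i'≤i, j'≤j} T⁺_{i',j'}(I) − Σ_{i'<i, j'<j} T⁻_{i',j'}(I) + Σ_{i'≥i, j'≥j} T⁻_{i',j'}(I) − Σ_{i'>i, j'>j} T⁺_{i',j'}(I) equals 1. -/
open scoped Classical
open Finset

variable {P : Type*} [Fintype P] [PartialOrder P]

namespace RookAux

variable {a b : ℕ}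

/-- The "extended indicator matrix" of the ideal `I`: `M (r+1) (c+1)` is the indicator of
`(r, c) ∈ I`; indices `0` (i.e. row/column `-1` of the grid) give `1`, and indices beyond
`a`, `b` give `0`. -/
noncomputable def M (a b : ℕ) (I : Finset (Fin a × Fin b)) : ℕ → ℕ → ℝ := fun r c =>
  if h0 : r = 0 ∨ c = 0 then (if r ≤ a ∧ c ≤ b then 1 else 0)
  else if h : r ≤ a ∧ c ≤ b then
    (if ((⟨r-1, by omega⟩ : Fin a), (⟨c-1, by omega⟩ : Fin b)) ∈ I then 1 else 0)
  else 0

lemma M_big {I : Finset (Fin a × Fin b)} {r c : ℕ} (h : a < r ∨ b < c) : M a b I r c = 0 := by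
  unfold M; split_ifs <;> first | rfl | omega

lemma M_row0 {I : Finset (Fin a × Fin b)} {c : ℕ} (hc : c ≤ b) : M a b I 0 c = 1 := by
  simp [M, hc]

lemma M_col0 {I : Finset (Fin a × Fin b)} {r : ℕ} (hr : r ≤ a) : M a b I r 0 = 1 := by
  simp [M, hr]

lemma M_val {I : Finset (Fin a × Fin b)} {r c : ℕ} (hr : r < a) (hc : c < b) :
    M a b I (r+1) (c+1) = if ((⟨r, hr⟩ : Fin a), (⟨c, hc⟩ : Fin b)) ∈ I then 1 else 0 := by
  unfold M
  rw [dif_neg (by omega), dif_pos (by omega)]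
  simp

lemma Tin_eq (I : Finset (Fin a × Fin b)) (hI : IsIdeal I) (p : Fin a × Fin b) :
    Tin p I = M a b I p.1.val (p.2.val+1) * M a b I (p.1.val+1) p.2.val
      - M a b I (p.1.val+1) (p.2.val+1) := by
  obtain ⟨⟨r, hr⟩, ⟨c, hc⟩⟩ := p
  simp only [M_val hr hc]
  by_cases hmem : ((⟨r, hr⟩ : Fin a), (⟨c, hc⟩ : Fin b)) ∈ I
  · rw [if_pos hmem]
    have h1 : M a b I r (c+1) = 1 := by
      rcases Nat.eq_zero_or_pos r with h | h
      · subst h; exact M_row0 (by omega)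
      · have hr' : r - 1 < a := by omega
        have hm : ((⟨r-1, hr'⟩ : Fin a), (⟨c, hc⟩ : Fin b)) ∈ I :=
          hI (by simp only [Prod.mk_le_mk, Fin.mk_le_mk]; omega) hmem
        have := M_val (I := I) hr' hc
        rw [show r = r - 1 + 1 by omega, this, if_pos hm]
    have h2 : M a b I (r+1) c = 1 := by
      rcases Nat.eq_zero_or_pos c with h | h
      · subst h; exact M_col0 (by omega)
      · have hc' : c - 1 < b := by omega
        have hm : ((⟨r, hr⟩ : Fin a), (⟨c-1, hc'⟩ : Fin b)) ∈ I :=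
          hI (by simp only [Prod.mk_le_mk, Fin.mk_le_mk]; omega) hmem
        have := M_val (I := I) hr hc'
        rw [show c = c - 1 + 1 by omega, this, if_pos hm]
    have h3 : ¬ CanTogIn I ((⟨r, hr⟩ : Fin a), (⟨c, hc⟩ : Fin b)) := fun h => h.1 hmem
    rw [Tin, if_neg h3, h1, h2]; ring
  · rw [if_neg hmem]
    by_cases hCT : CanTogIn I ((⟨r, hr⟩ : Fin a), (⟨c, hc⟩ : Fin b))
    · have h1 : M a b I r (c+1) = 1 := by
        rcases Nat.eq_zero_or_pos r with h | h
        · subst h; exact M_row0 (by omega)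
        · have hr' : r - 1 < a := by omega
          have hm : ((⟨r-1, hr'⟩ : Fin a), (⟨c, hc⟩ : Fin b)) ∈ I := by
            apply hCT.2
            simp only [Prod.mk_lt_mk, Fin.mk_lt_mk, Fin.mk_le_mk]; omega
          have := M_val (I := I) hr' hc
          rw [show r = r - 1 + 1 by omega, this, if_pos hm]
      have h2 : M a b I (r+1) c = 1 := by
        rcases Nat.eq_zero_or_pos c with h | h
        · subst h; exact M_col0 (by omega)
        · have hc' : c - 1 < b := by omega
          have hm : ((⟨r, hr⟩ : Fin a), (⟨c-1, hc'⟩ : Fin b)) ∈ I := by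
            apply hCT.2
            simp only [Prod.mk_lt_mk, Fin.mk_lt_mk, Fin.mk_le_mk]; omega
          have := M_val (I := I) hr hc'
          rw [show c = c - 1 + 1 by omega, this, if_pos hm]
      rw [Tin, if_pos hCT, h1, h2]; ring
    · have : ¬ ∀ q, q < ((⟨r, hr⟩ : Fin a), (⟨c, hc⟩ : Fin b)) → q ∈ I :=
        fun h => hCT ⟨hmem, h⟩
      push_neg at this
      obtain ⟨⟨⟨x, hx⟩, ⟨y, hy⟩⟩, hlt, hqn⟩ := this
      rw [Prod.mk_lt_mk] at hlt
      simp only [Fin.mk_lt_mk, Fin.mk_le_mk] at hlt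
      rw [Tin, if_neg hCT]
      rcases hlt with ⟨h1, h2⟩ | ⟨h1, h2⟩
      · have hr' : r - 1 < a := by omega
        have hnm : ((⟨r-1, hr'⟩ : Fin a), (⟨c, hc⟩ : Fin b)) ∉ I := by
          intro hm
          exact hqn (hI (by simp only [Prod.mk_le_mk, Fin.mk_le_mk]; omega) hm)
        have hone : M a b I r (c+1) = 0 := by
          have := M_val (I := I) hr' hc
          rw [show r = r - 1 + 1 by omega, this, if_neg hnm]
        rw [hone]; ring
      · have hc' : c - 1 < b := by omega
        have hnm : ((⟨r, hr⟩ : Fin a), (⟨c-1, hc'⟩ : Fin b)) ∉ I := by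
          intro hm
          exact hqn (hI (by simp only [Prod.mk_le_mk, Fin.mk_le_mk]; omega) hm)
        have hone : M a b I (r+1) c = 0 := by
          have := M_val (I := I) hr hc'
          rw [show c = c - 1 + 1 by omega, this, if_neg hnm]
        rw [hone]; ring

lemma Tout_eq (I : Finset (Fin a × Fin b)) (hI : IsIdeal I) (p : Fin a × Fin b) :
    Tout p I = M a b I (p.1.val+1) (p.2.val+1) - M a b I (p.1.val+2) (p.2.val+1)
      - M a b I (p.1.val+1) (p.2.val+2)
      + M a b I (p.1.val+1) (p.2.val+2) * M a b I (p.1.val+2) (p.2.val+1) := by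
  obtain ⟨⟨r, hr⟩, ⟨c, hc⟩⟩ := p
  simp only [M_val hr hc]
  by_cases hmem : ((⟨r, hr⟩ : Fin a), (⟨c, hc⟩ : Fin b)) ∈ I
  · rw [if_pos hmem]
    by_cases hCT : CanTogOut I ((⟨r, hr⟩ : Fin a), (⟨c, hc⟩ : Fin b))
    · have hX : M a b I (r+2) (c+1) = 0 := by
        rcases Nat.lt_or_ge (r+1) a with h | h
        · have hnm : ((⟨r+1, h⟩ : Fin a), (⟨c, hc⟩ : Fin b)) ∉ I := by
            apply hCT.2
            simp only [Prod.mk_lt_mk, Fin.mk_lt_mk, Fin.mk_le_mk]; omega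
          rw [show r + 2 = (r+1) + 1 by omega, M_val h hc, if_neg hnm]
        · exact M_big (Or.inl (by omega))
      have hY : M a b I (r+1) (c+2) = 0 := by
        rcases Nat.lt_or_ge (c+1) b with h | h
        · have hnm : ((⟨r, hr⟩ : Fin a), (⟨c+1, h⟩ : Fin b)) ∉ I := by
            apply hCT.2
            simp only [Prod.mk_lt_mk, Fin.mk_lt_mk, Fin.mk_le_mk]; omega
          rw [show c + 2 = (c+1) + 1 by omega, M_val hr h, if_neg hnm]
        · exact M_big (Or.inr (by omega))
      rw [Tout, if_pos hCT, hX, hY]; ring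
    · have : ¬ ∀ q, ((⟨r, hr⟩ : Fin a), (⟨c, hc⟩ : Fin b)) < q → q ∉ I :=
        fun h => hCT ⟨hmem, h⟩
      push_neg at this
      obtain ⟨⟨⟨x, hx⟩, ⟨y, hy⟩⟩, hlt, hqm⟩ := this
      rw [Prod.mk_lt_mk] at hlt
      simp only [Fin.mk_lt_mk, Fin.mk_le_mk] at hlt
      rw [Tout, if_neg hCT]
      rcases hlt with ⟨h1, h2⟩ | ⟨h1, h2⟩
      · have ha' : r + 1 < a := by omega
        have hm : ((⟨r+1, ha'⟩ : Fin a), (⟨c, hc⟩ : Fin b)) ∈ I :=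
          hI (by simp only [Prod.mk_le_mk, Fin.mk_le_mk]; omega) hqm
        have hX : M a b I (r+2) (c+1) = 1 := by
          rw [show r + 2 = (r+1) + 1 by omega, M_val ha' hc, if_pos hm]
        rw [hX]; ring
      · have hb' : c + 1 < b := by omega
        have hm : ((⟨r, hr⟩ : Fin a), (⟨c+1, hb'⟩ : Fin b)) ∈ I :=
          hI (by simp only [Prod.mk_le_mk, Fin.mk_le_mk]; omega) hqm
        have hY : M a b I (r+1) (c+2) = 1 := by
          rw [show c + 2 = (c+1) + 1 by omega, M_val hr hb', if_pos hm]
        rw [hY]; ring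
  · rw [if_neg hmem]
    have hCT : ¬ CanTogOut I ((⟨r, hr⟩ : Fin a), (⟨c, hc⟩ : Fin b)) := fun h => hmem h.1
    have hX : M a b I (r+2) (c+1) = 0 := by
      rcases Nat.lt_or_ge (r+1) a with h | h
      · have hnm : ((⟨r+1, h⟩ : Fin a), (⟨c, hc⟩ : Fin b)) ∉ I := by
          intro hm
          exact hmem (hI (by simp only [Prod.mk_le_mk, Fin.mk_le_mk]; omega) hm)
        rw [show r + 2 = (r+1) + 1 by omega, M_val h hc, if_neg hnm]
      · exact M_big (Or.inl (by omega))
    have hY : M a b I (r+1) (c+2) = 0 := by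
      rcases Nat.lt_or_ge (c+1) b with h | h
      · have hnm : ((⟨r, hr⟩ : Fin a), (⟨c+1, h⟩ : Fin b)) ∉ I := by
          intro hm
          exact hmem (hI (by simp only [Prod.mk_le_mk, Fin.mk_le_mk]; omega) hm)
        rw [show c + 2 = (c+1) + 1 by omega, M_val hr h, if_neg hnm]
      · exact M_big (Or.inr (by omega))
    rw [Tout, if_neg hCT, hX, hY]; ring

lemma oneD_AB (u v : ℕ → ℝ) (hv : v 0 = 1) (m : ℕ) :
    (∑ c ∈ range (m+1), (u (c+1) * v c - v (c+1)))
      - (∑ c ∈ range m, (u (c+1) - v (c+1) - u (c+2) + u (c+2) * v (c+1)))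
      = u (m+1) - v (m+1) := by
  induction m with
  | zero => simp [hv]
  | succ m ih =>
    rw [Finset.sum_range_succ (f := fun c => u (c+1) * v c - v (c+1)),
      Finset.sum_range_succ (f := fun c => u (c+1) - v (c+1) - u (c+2) + u (c+2) * v (c+1))]
    have e : m + 1 + 1 = m + 2 := rfl
    rw [e] at *
    linarith [ih]

lemma twoD_AB (g : ℕ → ℕ → ℝ) (m : ℕ) :
    ∀ n, (∀ c ≤ m+1, g 0 c = 1) → (∀ r ≤ n+1, g r 0 = 1) →
    (∑ r ∈ range (n+1), ∑ c ∈ range (m+1), (g r (c+1) * g (r+1) c - g (r+1) (c+1)))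
      - (∑ r ∈ range n, ∑ c ∈ range m,
          (g (r+1) (c+1) - g (r+2) (c+1) - g (r+1) (c+2) + g (r+1) (c+2) * g (r+2) (c+1)))
      = 1 - g (n+1) (m+1) := by
  intro n
  induction n with
  | zero =>
    intro h0 h1
    simp only [zero_add, Finset.sum_range_zero, Finset.sum_range_one, sub_zero]
    have : ∀ c ∈ range (m+1), g 0 (c+1) * g 1 c - g 1 (c+1) = g 1 c - g 1 (c+1) := by
      intro c hc
      rw [Finset.mem_range] at hc
      rw [h0 (c+1) (by omega), one_mul]
    rw [Finset.sum_congr rfl this, Finset.sum_range_sub' (fun c => g 1 c)]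
    rw [h1 1 (by omega)]
  | succ n ih =>
    intro h0 h1
    rw [Finset.sum_range_succ
        (f := fun r => ∑ c ∈ range (m+1), (g r (c+1) * g (r+1) c - g (r+1) (c+1))),
      Finset.sum_range_succ
        (f := fun r => ∑ c ∈ range m,
          (g (r+1) (c+1) - g (r+2) (c+1) - g (r+1) (c+2) + g (r+1) (c+2) * g (r+2) (c+1)))]
    have hIH := ih h0 (fun r hr => h1 r (by omega))
    have hone := oneD_AB (g (n+1)) (g (n+2)) (h1 (n+2) (by omega)) m
    have e2 : n + 1 + 1 = n + 2 := rfl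
    simp only [e2]
    linarith [hIH, hone]

lemma oneD_CD (u v : ℕ → ℝ) (m : ℕ) :
    (∑ t ∈ range (m+1), (u (t+1) - v (t+1) - u (t+2) + u (t+2) * v (t+1)))
      = u 1 - u (m+2) - (∑ t ∈ range (m+1), v (t+1)) + ∑ t ∈ range (m+1), u (t+2) * v (t+1) := by
  induction m with
  | zero => simp; ring
  | succ m ih =>
    rw [Finset.sum_range_succ (f := fun t => u (t+1) - v (t+1) - u (t+2) + u (t+2) * v (t+1)),
      Finset.sum_range_succ (f := fun t => v (t+1)),
      Finset.sum_range_succ (f := fun t => u (t+2) * v (t+1))]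
    have e : m + 1 + 1 = m + 2 := rfl
    simp only [e] at *
    linarith [ih]

lemma twoD_CD (h : ℕ → ℕ → ℝ) (m : ℕ) (hx : ∀ s, h s (m+2) = 0) :
    ∀ n, (∑ s ∈ range (n+1), ∑ t ∈ range (m+1),
        (h (s+1) (t+1) - h (s+2) (t+1) - h (s+1) (t+2) + h (s+1) (t+2) * h (s+2) (t+1)))
      - (∑ s ∈ range n, ∑ t ∈ range m, (h (s+1) (t+2) * h (s+2) (t+1) - h (s+2) (t+2)))
      = h 1 1 - (∑ t ∈ range (m+1), h (n+2) (t+1))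
        + ∑ t ∈ range (m+1), h (n+1) (t+2) * h (n+2) (t+1) := by
  intro n
  induction n with
  | zero =>
    simp only [zero_add, Finset.sum_range_zero, Finset.sum_range_one, sub_zero]
    rw [oneD_CD (h 1) (h 2) m, hx 1]
    ring
  | succ n ih =>
    rw [Finset.sum_range_succ
        (f := fun s => ∑ t ∈ range (m+1),
          (h (s+1) (t+1) - h (s+2) (t+1) - h (s+1) (t+2) + h (s+1) (t+2) * h (s+2) (t+1))),
      Finset.sum_range_succ
        (f := fun s => ∑ t ∈ range m, (h (s+1) (t+2) * h (s+2) (t+1) - h (s+2) (t+2)))]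
    have e2 : n + 1 + 1 = n + 2 := rfl
    have e3 : n + 1 + 2 = n + 3 := rfl
    have e4 : n + 2 + 1 = n + 3 := rfl
    simp only [e2, e3, e4]
    have hC := oneD_CD (h (n+2)) (h (n+3)) m
    have hD : (∑ t ∈ range m, (h (n+1) (t+2) * h (n+2) (t+1) - h (n+2) (t+2)))
        = (∑ t ∈ range (m+1), h (n+1) (t+2) * h (n+2) (t+1))
          - (∑ t ∈ range (m+1), h (n+2) (t+2))
          - h (n+1) (m+2) * h (n+2) (m+1) + h (n+2) (m+2) := by
      rw [Finset.sum_sub_distrib,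
        Finset.sum_range_succ (f := fun t => h (n+1) (t+2) * h (n+2) (t+1)),
        Finset.sum_range_succ (f := fun t => h (n+2) (t+2))]
      ring
    have hz1 := hx (n+1)
    have hz2 := hx (n+2)
    have hsh1 := Finset.sum_range_succ' (fun t => h (n+2) (t+1)) m
    have hsh2 := Finset.sum_range_succ (fun t => h (n+2) (t+2)) m
    simp only [show ∀ t : ℕ, t + 1 + 1 = t + 2 from fun t => rfl, zero_add] at hsh1
    have hW : h (n+1) (m+2) * h (n+2) (m+1) = 0 := by rw [hz1]; ring
    linarith [ih, hC, hD]

lemma filter_range_le (k n : ℕ) (h : k < n) :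
    (range n).filter (fun r => r ≤ k) = range (k+1) := by
  ext x; simp only [Finset.mem_filter, Finset.mem_range]; omega

lemma filter_range_lt (k n : ℕ) (h : k ≤ n) :
    (range n).filter (fun r => r < k) = range k := by
  ext x; simp only [Finset.mem_filter, Finset.mem_range]; omega

lemma filter_range_ge (k n : ℕ) :
    (range n).filter (fun r => k ≤ r) = Ico k n := by
  ext x; simp only [Finset.mem_filter, Finset.mem_range, Finset.mem_Ico]; omega

lemma filter_range_gt (k n : ℕ) :
    (range n).filter (fun r => k < r) = Ico (k+1) n := by
  ext x; simp only [Finset.mem_filter, Finset.mem_range, Finset.mem_Ico]; omega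

lemma sum_grid {a b : ℕ} (f : ℕ → ℕ → ℝ) (P1 P2 : ℕ → Prop) [DecidablePred P1] [DecidablePred P2] :
    ∑ p ∈ univ.filter (fun p : Fin a × Fin b => P1 p.1.val ∧ P2 p.2.val), f p.1.val p.2.val
      = ∑ r ∈ (range a).filter P1, ∑ c ∈ (range b).filter P2, f r c := by
  rw [Finset.sum_filter, Fintype.sum_prod_type]
  calc (∑ x : Fin a, ∑ y : Fin b, if P1 x.val ∧ P2 y.val then f x.val y.val else 0)
      = ∑ r ∈ range a, ∑ y : Fin b, if P1 r ∧ P2 y.val then f r y.val else 0 :=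
        Fin.sum_univ_eq_sum_range (fun r => ∑ y : Fin b, if P1 r ∧ P2 y.val then f r y.val else 0) a
    _ = ∑ r ∈ range a, ∑ c ∈ range b, if P1 r ∧ P2 c then f r c else 0 :=
        Finset.sum_congr rfl fun r _ =>
          Fin.sum_univ_eq_sum_range (fun c => if P1 r ∧ P2 c then f r c else 0) b
    _ = ∑ r ∈ (range a).filter P1, ∑ c ∈ (range b).filter P2, f r c := by
        rw [Finset.sum_filter]
        refine Finset.sum_congr rfl fun r _ => ?_
        by_cases h : P1 r
        · simp only [h, true_and, if_true, Finset.sum_filter]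
        · simp [h]

end RookAux

set_option maxHeartbeats 2000000 in
set_option maxRecDepth 8000 in
/-- The rook statistic on the rectangle poset `[a]×[b]` equals `1` on every order ideal. -/
theorem rect_rook_eq_one (a b : ℕ) (i : Fin a) (j : Fin b)
    (I : Finset (Fin a × Fin b)) (hI : IsIdeal I) :
    (∑ p ∈ univ.filter (fun p : Fin a × Fin b => p.1 ≤ i ∧ p.2 ≤ j), Tin p I)
      - (∑ p ∈ univ.filter (fun p : Fin a × Fin b => p.1 < i ∧ p.2 < j), Tout p I)
      + (∑ p ∈ univ.filter (fun p : Fin a × Fin b => i ≤ p.1 ∧ j ≤ p.2), Tout p I)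
      - (∑ p ∈ univ.filter (fun p : Fin a × Fin b => i < p.1 ∧ j < p.2), Tin p I) = 1 := by
  classical
  have hia : i.val < a := i.isLt
  have hjb : j.val < b := j.isLt
  set g := RookAux.M a b I with hg
  set I1 := i.val with hI1
  set J1 := j.val with hJ1
  set A' := a - 1 - I1 with hA'
  set B' := b - 1 - J1 with hB'
  have haA : a - I1 = A' + 1 := by omega
  have hbB : b - J1 = B' + 1 := by omega
  have haA' : a - (I1 + 1) = A' := by omega
  have hbB' : b - (J1 + 1) = B' := by omega
  -- the four sums in range form
  have hA : (∑ p ∈ univ.filter (fun p : Fin a × Fin b => p.1 ≤ i ∧ p.2 ≤ j), Tin p I)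
      = ∑ r ∈ range (I1+1), ∑ c ∈ range (J1+1),
          (g r (c+1) * g (r+1) c - g (r+1) (c+1)) := by
    calc (∑ p ∈ univ.filter (fun p : Fin a × Fin b => p.1 ≤ i ∧ p.2 ≤ j), Tin p I)
        = ∑ p ∈ univ.filter (fun p : Fin a × Fin b => p.1.val ≤ I1 ∧ p.2.val ≤ J1),
            (fun r c => g r (c+1) * g (r+1) c - g (r+1) (c+1)) p.1.val p.2.val := by
          refine Finset.sum_congr (Finset.filter_congr fun p _ => Iff.rfl) (fun p _ => RookAux.Tin_eq I hI p)
      _ = ∑ r ∈ (range a).filter (fun r => r ≤ I1), ∑ c ∈ (range b).filter (fun c => c ≤ J1),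
            (fun r c => g r (c+1) * g (r+1) c - g (r+1) (c+1)) r c :=
          RookAux.sum_grid (fun r c => g r (c+1) * g (r+1) c - g (r+1) (c+1))
            (fun r => r ≤ I1) (fun c => c ≤ J1)
      _ = ∑ r ∈ range (I1+1), ∑ c ∈ range (J1+1), (g r (c+1) * g (r+1) c - g (r+1) (c+1)) := by
          rw [RookAux.filter_range_le _ _ hia, RookAux.filter_range_le _ _ hjb]
  have hB : (∑ p ∈ univ.filter (fun p : Fin a × Fin b => p.1 < i ∧ p.2 < j), Tout p I)
      = ∑ r ∈ range I1, ∑ c ∈ range J1,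
          (g (r+1) (c+1) - g (r+2) (c+1) - g (r+1) (c+2) + g (r+1) (c+2) * g (r+2) (c+1)) := by
    calc (∑ p ∈ univ.filter (fun p : Fin a × Fin b => p.1 < i ∧ p.2 < j), Tout p I)
        = ∑ p ∈ univ.filter (fun p : Fin a × Fin b => p.1.val < I1 ∧ p.2.val < J1),
            (fun r c => g (r+1) (c+1) - g (r+2) (c+1) - g (r+1) (c+2)
              + g (r+1) (c+2) * g (r+2) (c+1)) p.1.val p.2.val := by
          refine Finset.sum_congr (Finset.filter_congr fun p _ => Iff.rfl) (fun p _ => RookAux.Tout_eq I hI p)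
      _ = ∑ r ∈ (range a).filter (fun r => r < I1), ∑ c ∈ (range b).filter (fun c => c < J1),
            (fun r c => g (r+1) (c+1) - g (r+2) (c+1) - g (r+1) (c+2)
              + g (r+1) (c+2) * g (r+2) (c+1)) r c :=
          RookAux.sum_grid (fun r c => g (r+1) (c+1) - g (r+2) (c+1) - g (r+1) (c+2)
              + g (r+1) (c+2) * g (r+2) (c+1)) (fun r => r < I1) (fun c => c < J1)
      _ = ∑ r ∈ range I1, ∑ c ∈ range J1,
            (g (r+1) (c+1) - g (r+2) (c+1) - g (r+1) (c+2) + g (r+1) (c+2) * g (r+2) (c+1)) := by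
          rw [RookAux.filter_range_lt _ _ (by omega), RookAux.filter_range_lt _ _ (by omega)]
  have hC : (∑ p ∈ univ.filter (fun p : Fin a × Fin b => i ≤ p.1 ∧ j ≤ p.2), Tout p I)
      = ∑ s ∈ range (A'+1), ∑ t ∈ range (B'+1),
          (g (I1+(s+1)) (J1+(t+1)) - g (I1+(s+2)) (J1+(t+1)) - g (I1+(s+1)) (J1+(t+2))
            + g (I1+(s+1)) (J1+(t+2)) * g (I1+(s+2)) (J1+(t+1))) := by
    calc (∑ p ∈ univ.filter (fun p : Fin a × Fin b => i ≤ p.1 ∧ j ≤ p.2), Tout p I)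
        = ∑ p ∈ univ.filter (fun p : Fin a × Fin b => I1 ≤ p.1.val ∧ J1 ≤ p.2.val),
            (fun r c => g (r+1) (c+1) - g (r+2) (c+1) - g (r+1) (c+2)
              + g (r+1) (c+2) * g (r+2) (c+1)) p.1.val p.2.val := by
          refine Finset.sum_congr (Finset.filter_congr fun p _ => Iff.rfl) (fun p _ => RookAux.Tout_eq I hI p)
      _ = ∑ r ∈ (range a).filter (fun r => I1 ≤ r), ∑ c ∈ (range b).filter (fun c => J1 ≤ c),
            (fun r c => g (r+1) (c+1) - g (r+2) (c+1) - g (r+1) (c+2)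
              + g (r+1) (c+2) * g (r+2) (c+1)) r c :=
          RookAux.sum_grid (fun r c => g (r+1) (c+1) - g (r+2) (c+1) - g (r+1) (c+2)
              + g (r+1) (c+2) * g (r+2) (c+1)) (fun r => I1 ≤ r) (fun c => J1 ≤ c)
      _ = ∑ s ∈ range (A'+1), ∑ t ∈ range (B'+1),
            (g (I1+(s+1)) (J1+(t+1)) - g (I1+(s+2)) (J1+(t+1)) - g (I1+(s+1)) (J1+(t+2))
              + g (I1+(s+1)) (J1+(t+2)) * g (I1+(s+2)) (J1+(t+1))) := by
          rw [RookAux.filter_range_ge, RookAux.filter_range_ge,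
            Finset.sum_Ico_eq_sum_range, haA]
          refine Finset.sum_congr rfl fun s _ => ?_
          rw [Finset.sum_Ico_eq_sum_range, hbB]
          refine Finset.sum_congr rfl fun t _ => ?_
          ring_nf
  have hD : (∑ p ∈ univ.filter (fun p : Fin a × Fin b => i < p.1 ∧ j < p.2), Tin p I)
      = ∑ s ∈ range A', ∑ t ∈ range B',
          (g (I1+(s+1)) (J1+(t+2)) * g (I1+(s+2)) (J1+(t+1)) - g (I1+(s+2)) (J1+(t+2))) := by
    calc (∑ p ∈ univ.filter (fun p : Fin a × Fin b => i < p.1 ∧ j < p.2), Tin p I)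
        = ∑ p ∈ univ.filter (fun p : Fin a × Fin b => I1 < p.1.val ∧ J1 < p.2.val),
            (fun r c => g r (c+1) * g (r+1) c - g (r+1) (c+1)) p.1.val p.2.val := by
          refine Finset.sum_congr (Finset.filter_congr fun p _ => Iff.rfl) (fun p _ => RookAux.Tin_eq I hI p)
      _ = ∑ r ∈ (range a).filter (fun r => I1 < r), ∑ c ∈ (range b).filter (fun c => J1 < c),
            (fun r c => g r (c+1) * g (r+1) c - g (r+1) (c+1)) r c :=
          RookAux.sum_grid (fun r c => g r (c+1) * g (r+1) c - g (r+1) (c+1))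
            (fun r => I1 < r) (fun c => J1 < c)
      _ = ∑ s ∈ range A', ∑ t ∈ range B',
            (g (I1+(s+1)) (J1+(t+2)) * g (I1+(s+2)) (J1+(t+1)) - g (I1+(s+2)) (J1+(t+2))) := by
          rw [RookAux.filter_range_gt, RookAux.filter_range_gt,
            Finset.sum_Ico_eq_sum_range, haA']
          refine Finset.sum_congr rfl fun s _ => ?_
          rw [Finset.sum_Ico_eq_sum_range, hbB']
          refine Finset.sum_congr rfl fun t _ => ?_
          ring_nf
  -- apply the abstract lemmas
  have hAB := RookAux.twoD_AB g J1 I1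
    (fun c hc => RookAux.M_row0 (by omega)) (fun r hr => RookAux.M_col0 (by omega))
  have hxB : ∀ s, (fun s t => g (I1+s) (J1+t)) s (B'+2) = 0 := by
    intro s
    show g (I1+s) (J1+(B'+2)) = 0
    rw [show J1 + (B'+2) = b + 1 by omega]
    exact RookAux.M_big (Or.inr (by omega))
  have hCD := RookAux.twoD_CD (fun s t => g (I1+s) (J1+t)) B' hxB A'
  have hz1 : (∑ t ∈ range (B'+1), g (I1+(A'+2)) (J1+(t+1))) = 0 := by
    refine Finset.sum_eq_zero fun t _ => ?_
    rw [show I1 + (A'+2) = a + 1 by omega]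
    exact RookAux.M_big (Or.inl (by omega))
  have hz2 : (∑ t ∈ range (B'+1), g (I1+(A'+1)) (J1+(t+2)) * g (I1+(A'+2)) (J1+(t+1))) = 0 := by
    refine Finset.sum_eq_zero fun t _ => ?_
    have h0 : g (I1+(A'+2)) (J1+(t+1)) = 0 := by
      rw [show I1 + (A'+2) = a + 1 by omega]
      exact RookAux.M_big (Or.inl (by omega))
    rw [h0]; ring
  have hcorner : g (I1+1) (J1+1) = g (I1+(0+1)) (J1+(0+1)) := by norm_num
  rw [hA, hB, hC, hD]
  rw [hz1, hz2] at hCD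
  have h11 : (fun s t => g (I1+s) (J1+t)) 1 1 = g (I1+1) (J1+1) := rfl
  linarith [hAB, hCD]
end

section
/- Let P = [a]×[b]. For every (i,j) ∈ P and every order ideal I of P, the order ideal indicator 1_{(i,j)∈I} equals Σ_{i'≥i, j'≥j} T⁻_{i',j'}(I) − Σ_{i'>i, j'>j} T⁺_{i',j'}(I). -/
open scoped Classical
open Finset

variable {P : Type*} [Fintype P] [PartialOrder P]

namespace RectAux

variable {a b : ℕ}

noncomputable def Hcol (I : Finset (Fin a × Fin b)) (c : ℕ) : ℕ :=
  if hc : c < a then (univ.filter (fun r : Fin b => ((⟨c, hc⟩ : Fin a), r) ∈ I)).card else 0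

lemma Hcol_le (I : Finset (Fin a × Fin b)) (c : ℕ) : Hcol I c ≤ b := by
  unfold Hcol
  split
  · exact (Finset.card_filter_le _ _).trans (by simp)
  · omega

lemma mem_iff {I : Finset (Fin a × Fin b)} (hI : IsIdeal I) (c : Fin a) (r : Fin b) :
    (c, r) ∈ I ↔ (r : ℕ) < Hcol I c := by
  have hc : (c : ℕ) < a := c.isLt
  unfold Hcol
  rw [dif_pos hc]
  simp only [Fin.eta]
  constructor
  · intro hmem
    have hsub : Finset.Iic r ⊆ univ.filter (fun r' : Fin b => (c, r') ∈ I) := by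
      intro r' hr'
      simp only [Finset.mem_Iic] at hr'
      simp only [Finset.mem_filter, Finset.mem_univ, true_and]
      exact hI (Prod.mk_le_mk.mpr ⟨le_refl c, hr'⟩) hmem
    have h1 := Finset.card_le_card hsub
    rw [Fin.card_Iic] at h1
    omega
  · intro hlt
    by_contra hmem
    have hsub : univ.filter (fun r' : Fin b => (c, r') ∈ I) ⊆ Finset.Iio r := by
      intro r' hr'
      simp only [Finset.mem_filter, Finset.mem_univ, true_and] at hr'
      simp only [Finset.mem_Iio]
      by_contra hge
      exact hmem (hI (Prod.mk_le_mk.mpr ⟨le_refl c, le_of_not_gt hge⟩) hr')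
    have h1 := Finset.card_le_card hsub
    rw [Fin.card_Iio] at h1
    omega

lemma Hcol_anti {I : Finset (Fin a × Fin b)} (hI : IsIdeal I) (c : ℕ) :
    Hcol I (c + 1) ≤ Hcol I c := by
  by_cases hc1 : c + 1 < a
  · have hc : c < a := by omega
    unfold Hcol
    rw [dif_pos hc1, dif_pos hc]
    apply Finset.card_le_card
    intro r hr
    simp only [Finset.mem_filter, Finset.mem_univ, true_and] at hr ⊢
    exact hI (Prod.mk_le_mk.mpr ⟨by simp [Fin.le_def], le_refl r⟩) hr
  · unfold Hcol
    rw [dif_neg hc1]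
    omega

lemma Hcol_zero_of_ge (I : Finset (Fin a × Fin b)) {c : ℕ} (hc : ¬ c < a) : Hcol I c = 0 := by
  unfold Hcol; rw [dif_neg hc]


lemma Hcol_mono {I : Finset (Fin a × Fin b)} (hI : IsIdeal I) {c c' : ℕ} (h : c ≤ c') :
    Hcol I c' ≤ Hcol I c := by
  induction c' with
  | zero =>
    have : c = 0 := by omega
    subst this; exact le_refl _
  | succ n ih =>
    rcases Nat.lt_or_ge c (n + 1) with h' | h'
    · exact le_trans (Hcol_anti hI n) (ih (by omega))
    · have : c = n + 1 := by omega
      subst this; exact le_refl _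

lemma togOut_iff {I : Finset (Fin a × Fin b)} (hI : IsIdeal I) (c : Fin a) (r : Fin b) :
    CanTogOut I (c, r) ↔ (Hcol I c = r + 1 ∧ Hcol I (c + 1) ≤ r) := by
  constructor
  · rintro ⟨hmem, hmax⟩
    rw [mem_iff hI] at hmem
    constructor
    · by_contra hne
      have hgt : (r : ℕ) + 1 < Hcol I c := by omega
      have hrb : (r : ℕ) + 1 < b := by
        have := Hcol_le I c; omega
      have : (c, (⟨(r : ℕ) + 1, hrb⟩ : Fin b)) ∈ I := by
        rw [mem_iff hI]; simpa using hgt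
      exact hmax _ (Prod.mk_lt_mk.mpr (Or.inr ⟨le_refl c, by simp [Fin.lt_def]⟩)) this
    · by_cases hc1 : (c : ℕ) + 1 < a
      · by_contra hgt
        push_neg at hgt
        have : ((⟨(c : ℕ) + 1, hc1⟩ : Fin a), r) ∈ I := by
          rw [mem_iff hI]
          simpa using hgt
        exact hmax _ (Prod.mk_lt_mk.mpr (Or.inl ⟨by simp [Fin.lt_def], le_refl r⟩)) this
      · rw [Hcol_zero_of_ge I hc1]; omega
  · rintro ⟨h1, h2⟩
    constructor
    · rw [mem_iff hI]; omega
    · rintro ⟨c', r'⟩ hlt hmem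
      rw [mem_iff hI] at hmem
      rw [Prod.mk_lt_mk] at hlt
      have hle : c ≤ c' ∧ r ≤ r' := by
        rcases hlt with ⟨h, h'⟩ | ⟨h, h'⟩
        exacts [⟨le_of_lt h, h'⟩, ⟨h, le_of_lt h'⟩]
      rcases hlt with ⟨hc, -⟩ | ⟨-, hr⟩
      · have : Hcol I (c' : ℕ) ≤ Hcol I ((c : ℕ) + 1) := Hcol_mono hI hc
        have hr' : (r : ℕ) ≤ (r' : ℕ) := hle.2
        omega
      · have : Hcol I (c' : ℕ) ≤ Hcol I (c : ℕ) := Hcol_mono hI hle.1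
        have : (r : ℕ) < (r' : ℕ) := hr
        omega

lemma togIn_iff {I : Finset (Fin a × Fin b)} (hI : IsIdeal I) (c : Fin a) (r : Fin b) :
    CanTogIn I (c, r) ↔ (Hcol I c = r ∧ ((c : ℕ) = 0 ∨ (r : ℕ) < Hcol I ((c : ℕ) - 1))) := by
  constructor
  · rintro ⟨hmem, hmin⟩
    rw [mem_iff hI] at hmem
    push_neg at hmem
    constructor
    · by_contra hne
      have hlt : Hcol I c < r := by omega
      have hrpos : 0 < (r : ℕ) := by omega
      have : (c, (⟨(r : ℕ) - 1, by omega⟩ : Fin b)) ∈ I :=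
        hmin _ (Prod.mk_lt_mk.mpr (Or.inr ⟨le_refl c, by simp [Fin.lt_def]; omega⟩))
      rw [mem_iff hI] at this
      simp at this
      omega
    · by_cases hc0 : (c : ℕ) = 0
      · exact Or.inl hc0
      · right
        have hc1 : (c : ℕ) - 1 < a := by have := c.isLt; omega
        have : ((⟨(c : ℕ) - 1, hc1⟩ : Fin a), r) ∈ I :=
          hmin _ (Prod.mk_lt_mk.mpr (Or.inl ⟨by simp [Fin.lt_def]; omega, le_refl r⟩))
        rw [mem_iff hI] at this
        simpa using this
  · rintro ⟨h1, h2⟩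
    constructor
    · rw [mem_iff hI]; omega
    · rintro ⟨c', r'⟩ hlt
      rw [mem_iff hI]
      rw [Prod.mk_lt_mk] at hlt
      have hle : c' ≤ c ∧ r' ≤ r := by
        rcases hlt with ⟨h, h'⟩ | ⟨h, h'⟩
        exacts [⟨le_of_lt h, h'⟩, ⟨h, le_of_lt h'⟩]
      rcases hlt with ⟨hc, -⟩ | ⟨-, hr⟩
      · have hcc : (c' : ℕ) ≤ (c : ℕ) - 1 := by
          have : (c' : ℕ) < (c : ℕ) := hc
          omega
        have hmono : Hcol I ((c : ℕ) - 1) ≤ Hcol I (c' : ℕ) := Hcol_mono hI hcc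
        have hc0 : (c' : ℕ) < (c : ℕ) := hc
        have hr' : (r' : ℕ) ≤ (r : ℕ) := hle.2
        rcases h2 with h2 | h2
        · omega
        · omega
      · have hmono : Hcol I (c : ℕ) ≤ Hcol I (c' : ℕ) := Hcol_mono hI hle.1
        have : (r' : ℕ) < (r : ℕ) := hr
        omega

end RectAux

lemma key_telescope (H : ℕ → ℕ) (hmono : ∀ c, H (c + 1) ≤ H c) (a i j : ℕ) (hia : i < a)
    (hHa : H a = 0) :
    (∑ c ∈ range a, (if i ≤ c ∧ j < H c ∧ H (c + 1) < H c then (1 : ℝ) else 0))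
      - (∑ c ∈ range a, (if i < c ∧ j < H c ∧ H c < H (c - 1) then (1 : ℝ) else 0))
      = if j < H i then 1 else 0 := by
  set G : ℕ → ℝ := fun c => if i ≤ c ∧ j < H c then 1 else 0 with hG
  have hshift : (∑ c ∈ range a, (if i < c ∧ j < H c ∧ H c < H (c - 1) then (1 : ℝ) else 0))
      = ∑ c ∈ range a, (if i ≤ c ∧ j < H (c + 1) ∧ H (c + 1) < H c then (1 : ℝ) else 0) := by
    obtain ⟨m, rfl⟩ : ∃ m, a = m + 1 := ⟨a - 1, by omega⟩
    rw [Finset.sum_range_succ'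
      (fun c => if i < c ∧ j < H c ∧ H c < H (c - 1) then (1 : ℝ) else 0) m]
    rw [Finset.sum_range_succ
      (fun c => if i ≤ c ∧ j < H (c + 1) ∧ H (c + 1) < H c then (1 : ℝ) else 0) m]
    have h0 : (if i < 0 ∧ j < H 0 ∧ H 0 < H (0 - 1) then (1 : ℝ) else 0) = 0 := by
      rw [if_neg]; rintro ⟨h, -⟩; omega
    have hm : (if i ≤ m ∧ j < H (m + 1) ∧ H (m + 1) < H m then (1 : ℝ) else 0) = 0 := by
      rw [if_neg]; rintro ⟨-, h, -⟩; omega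
    rw [h0, hm, add_zero, add_zero]
    apply Finset.sum_congr rfl
    intro c _
    have harith : c + 1 - 1 = c := by omega
    rw [harith]
    refine if_congr ?_ rfl rfl
    constructor <;> rintro ⟨h1, h2⟩ <;> exact ⟨by omega, h2⟩
  rw [hshift, ← Finset.sum_sub_distrib]
  have hpt : ∀ c, (if i ≤ c ∧ j < H c ∧ H (c + 1) < H c then (1 : ℝ) else 0)
      - (if i ≤ c ∧ j < H (c + 1) ∧ H (c + 1) < H c then (1 : ℝ) else 0)
      = (G c - G (c + 1)) + (if c + 1 = i then G (c + 1) else 0) := by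
    intro c
    have hm := hmono c
    simp only [hG]
    split_ifs <;> (try norm_num) <;> omega
  calc (∑ c ∈ range a, ((if i ≤ c ∧ j < H c ∧ H (c + 1) < H c then (1 : ℝ) else 0)
          - (if i ≤ c ∧ j < H (c + 1) ∧ H (c + 1) < H c then (1 : ℝ) else 0)))
      = (∑ c ∈ range a, (G c - G (c + 1)))
        + ∑ c ∈ range a, (if c + 1 = i then G (c + 1) else 0) := by
        rw [← Finset.sum_add_distrib]
        exact Finset.sum_congr rfl fun c _ => hpt c
    _ = (G 0 - G a) + (if 1 ≤ i then G i else 0) := by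
        rw [Finset.sum_range_sub' G a]
        congr 1
        by_cases hi : 1 ≤ i
        · rw [if_pos hi]
          rw [Finset.sum_eq_single_of_mem (i - 1) (Finset.mem_range.mpr (by omega))]
          · rw [if_pos (by omega)]
            congr 1
            omega
          · intro c _ hne
            rw [if_neg (by omega)]
        · rw [if_neg hi]
          apply Finset.sum_eq_zero
          intro c _
          rw [if_neg (by omega)]
    _ = if j < H i then 1 else 0 := by
        simp only [hG]
        by_cases hi : i = 0
        · subst hi
          rw [if_neg (show ¬(0 ≤ a ∧ j < H a) by rintro ⟨-, h⟩; omega),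
            if_neg (show ¬(1 ≤ 0) by omega)]
          simp only [Nat.zero_le, true_and, sub_zero, add_zero]
        · rw [if_neg (show ¬(i ≤ 0 ∧ j < H 0) by rintro ⟨h, -⟩; omega),
            if_neg (show ¬(i ≤ a ∧ j < H a) by rintro ⟨-, h⟩; omega),
            if_pos (show 1 ≤ i by omega)]
          simp only [le_refl, true_and]
          ring_nf


/-- On the rectangle `[a]×[b]`, the order ideal indicator of `(i,j)` equals
`∑_{i'≥i, j'≥j} T⁻_{i',j'} - ∑_{i'>i, j'>j} T⁺_{i',j'}`. -/
theorem rect_indicator_eq_half_rook (a b : ℕ) (i : Fin a) (j : Fin b)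
    (I : Finset (Fin a × Fin b)) (hI : IsIdeal I) :
    (if (i, j) ∈ I then (1 : ℝ) else 0)
      = (∑ p ∈ univ.filter (fun p : Fin a × Fin b => i ≤ p.1 ∧ j ≤ p.2), Tout p I)
        - (∑ p ∈ univ.filter (fun p : Fin a × Fin b => i < p.1 ∧ j < p.2), Tin p I) := by
  classical
  have hA : (∑ p ∈ univ.filter (fun p : Fin a × Fin b => i ≤ p.1 ∧ j ≤ p.2), Tout p I)
      = ∑ c ∈ range a, (if (i : ℕ) ≤ c ∧ (j : ℕ) < RectAux.Hcol I c ∧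
          RectAux.Hcol I (c + 1) < RectAux.Hcol I c then (1 : ℝ) else 0) := by
    rw [Finset.sum_filter, Fintype.sum_prod_type, ← Fin.sum_univ_eq_sum_range]
    apply Finset.sum_congr rfl
    intro c _
    have hterm : ∀ r : Fin b, (if (i ≤ c ∧ j ≤ r) then Tout (c, r) I else 0)
        = if ((i : ℕ) ≤ (c : ℕ) ∧ (j : ℕ) ≤ (r : ℕ) ∧ RectAux.Hcol I (c : ℕ) = (r : ℕ) + 1 ∧
            RectAux.Hcol I ((c : ℕ) + 1) ≤ (r : ℕ)) then (1 : ℝ) else 0 := by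
      intro r
      simp only [Tout, RectAux.togOut_iff hI, Fin.le_def]
      split_ifs <;> first | rfl | tauto
    simp only [hterm]
    by_cases hC : (i : ℕ) ≤ (c : ℕ) ∧ (j : ℕ) < RectAux.Hcol I (c : ℕ) ∧
        RectAux.Hcol I ((c : ℕ) + 1) < RectAux.Hcol I (c : ℕ)
    · rw [if_pos hC]
      have hb : RectAux.Hcol I (c : ℕ) - 1 < b := by
        have := RectAux.Hcol_le I (c : ℕ); omega
      rw [Finset.sum_eq_single_of_mem (⟨RectAux.Hcol I (c : ℕ) - 1, hb⟩ : Fin b)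
        (Finset.mem_univ _)]
      · rw [if_pos]
        exact ⟨hC.1, by simp; omega, by simp; omega, by simp; omega⟩
      · intro r _ hne
        rw [if_neg]
        rintro ⟨-, -, h1, -⟩
        exact hne (by ext; simp; omega)
    · rw [if_neg hC]
      apply Finset.sum_eq_zero
      intro r _
      rw [if_neg]
      rintro ⟨h1, h2, h3, h4⟩
      exact hC ⟨h1, by omega, by omega⟩
  have hB : (∑ p ∈ univ.filter (fun p : Fin a × Fin b => i < p.1 ∧ j < p.2), Tin p I)
      = ∑ c ∈ range a, (if (i : ℕ) < c ∧ (j : ℕ) < RectAux.Hcol I c ∧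
          RectAux.Hcol I c < RectAux.Hcol I (c - 1) then (1 : ℝ) else 0) := by
    rw [Finset.sum_filter, Fintype.sum_prod_type, ← Fin.sum_univ_eq_sum_range]
    apply Finset.sum_congr rfl
    intro c _
    have hterm : ∀ r : Fin b, (if (i < c ∧ j < r) then Tin (c, r) I else 0)
        = if ((i : ℕ) < (c : ℕ) ∧ (j : ℕ) < (r : ℕ) ∧ RectAux.Hcol I (c : ℕ) = (r : ℕ) ∧
            ((c : ℕ) = 0 ∨ (r : ℕ) < RectAux.Hcol I ((c : ℕ) - 1))) then (1 : ℝ) else 0 := by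
      intro r
      simp only [Tin, RectAux.togIn_iff hI, Fin.lt_def]
      split_ifs <;> first | rfl | tauto
    simp only [hterm]
    by_cases hC : (i : ℕ) < (c : ℕ) ∧ (j : ℕ) < RectAux.Hcol I (c : ℕ) ∧
        RectAux.Hcol I (c : ℕ) < RectAux.Hcol I ((c : ℕ) - 1)
    · rw [if_pos hC]
      have hb : RectAux.Hcol I (c : ℕ) < b := by
        have := RectAux.Hcol_le I ((c : ℕ) - 1); omega
      rw [Finset.sum_eq_single_of_mem (⟨RectAux.Hcol I (c : ℕ), hb⟩ : Fin b)
        (Finset.mem_univ _)]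
      · rw [if_pos]
        exact ⟨hC.1, by simp; omega, by simp, Or.inr (by simp; omega)⟩
      · intro r _ hne
        rw [if_neg]
        rintro ⟨-, -, h1, -⟩
        exact hne (by ext; simp; omega)
    · rw [if_neg hC]
      apply Finset.sum_eq_zero
      intro r _
      rw [if_neg]
      rintro ⟨h1, h2, h3, h4⟩
      rcases h4 with h4 | h4
      · omega
      · exact hC ⟨h1, by omega, by omega⟩
  rw [hA, hB]
  rw [key_telescope (RectAux.Hcol I) (RectAux.Hcol_anti hI) a (i : ℕ) (j : ℕ) i.isLt
    (RectAux.Hcol_zero_of_ge I (lt_irrefl a))]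
  simp only [RectAux.mem_iff hI i j]
end

section
/- Let P be the Type A_n root poset, realized as {(i,j) : 1 ≤ i,j ≤ n, i+j ≥ n+1} with componentwise order. For each 1 ≤ i ≤ n and every order ideal I of P, the rook statistic R_i(I) := T⁺_{i,n+1−i}(I) + Σ_{i'≥i, j'≥n+1−i} T⁻_{i',j'}(I) − Σ_{i'>i, j'>n+1−i} T⁺_{i',j'}(I) equals 1 (where statistics at (i',j') ∉ P are taken to be 0). -/
/-!
Above the diagonal point `c = (i, n + 1 - i)`, which is minimal in `P`, the root poset is the
full rectangle `[i, n] × [n + 1 - i, n]`, so there `I` is a staircase: a finite lower set `S` of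
`ℕ × ℕ` after translating `c` to the origin. The two sums count the outer corners of `S` (its
maximal cells) and its inner corners away from the two axes, and `T⁺_c = [c ∉ I] = [S = ∅]`.
A nonempty staircase has one more outer than inner corner: cell by cell, outer minus inner at
`(s, t)` equals `e(s, t) - e(s, t + 1)`, where `e` marks the last cell of each row, and the
telescoping sum along a row leaves `e(s, 0) = [(s, 0) ∈ S] - [(s + 1, 0) ∈ S]`, which
telescopes again to `[(0, 0) ∈ S]`.
-/

open scoped Classical
open Finset

variable {P : Type*} [Fintype P] [PartialOrder P]

/-- The Type `A_n` root poset, realized as `{(i,j) : 1 ≤ i,j ≤ n, i+j ≥ n+1}`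
with componentwise order (coordinates taken in `Fin (n+1)`, i.e. `0,…,n`). -/
abbrev RootA (n : ℕ) :=
  {p : Fin (n + 1) × Fin (n + 1) // 1 ≤ p.1.val ∧ 1 ≤ p.2.val ∧ n + 1 ≤ p.1.val + p.2.val}

section Grid

variable {S : Set (ℕ × ℕ)}

def IsOuterCorner (S : Set (ℕ × ℕ)) (q : ℕ × ℕ) : Prop :=
  q ∈ S ∧ (q.1 + 1, q.2) ∉ S ∧ (q.1, q.2 + 1) ∉ S

/-- An inner corner is indexed by the cell diagonally below it: `q + (1, 1)` is a minimal
element of the complement of `S` with both lower neighbours in `S`. -/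
def IsInnerCorner (S : Set (ℕ × ℕ)) (q : ℕ × ℕ) : Prop :=
  (q.1 + 1, q.2 + 1) ∉ S ∧ (q.1 + 1, q.2) ∈ S ∧ (q.1, q.2 + 1) ∈ S

def IsRowEnd (S : Set (ℕ × ℕ)) (q : ℕ × ℕ) : Prop :=
  q ∈ S ∧ (q.1 + 1, q.2) ∉ S

theorem Prod.lt_iff_succ_le_or_succ_le {q q' : ℕ × ℕ} :
    q < q' ↔ (q.1 + 1, q.2) ≤ q' ∨ (q.1, q.2 + 1) ≤ q' := by
  simp only [Prod.lt_iff, Prod.le_def]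
  omega

theorem IsLowerSet.forall_gt_notMem_iff (hS : IsLowerSet S) (q : ℕ × ℕ) :
    (∀ q', q < q' → q' ∉ S) ↔ (q.1 + 1, q.2) ∉ S ∧ (q.1, q.2 + 1) ∉ S := by
  refine ⟨fun h => ⟨h _ ?_, h _ ?_⟩, fun ⟨h₁, h₂⟩ q' hlt hq' => ?_⟩
  · simp [Prod.lt_iff]
  · simp [Prod.lt_iff]
  · rcases Prod.lt_iff_succ_le_or_succ_le.1 hlt with hle | hle
    exacts [h₁ (hS hle hq'), h₂ (hS hle hq')]

theorem IsLowerSet.outerCorner_sub_innerCorner (hS : IsLowerSet S) (s t : ℕ) :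
    ((if IsOuterCorner S (s, t) then 1 else 0) - if IsInnerCorner S (s, t) then 1 else 0 : ℝ) =
      (if IsRowEnd S (s, t) then 1 else 0) - if IsRowEnd S (s, t + 1) then 1 else 0 := by
  have h₁ : (s + 1, t) ∈ S → (s, t) ∈ S := fun h => hS (by simp) h
  have h₂ : (s, t + 1) ∈ S → (s, t) ∈ S := fun h => hS (by simp) h
  have h₃ : (s + 1, t + 1) ∈ S → (s + 1, t) ∈ S := fun h => hS (by simp) h
  have h₄ : (s + 1, t + 1) ∈ S → (s, t + 1) ∈ S := fun h => hS (by simp) h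
  simp only [IsOuterCorner, IsInnerCorner, IsRowEnd]
  by_cases (s, t) ∈ S <;> by_cases (s + 1, t) ∈ S <;> by_cases (s, t + 1) ∈ S <;>
    by_cases (s + 1, t + 1) ∈ S <;> simp_all

theorem IsLowerSet.rowEnd_eq (hS : IsLowerSet S) (s t : ℕ) :
    (if IsRowEnd S (s, t) then 1 else 0 : ℝ) =
      (if (s, t) ∈ S then 1 else 0) - if (s + 1, t) ∈ S then 1 else 0 := by
  have h : (s + 1, t) ∈ S → (s, t) ∈ S := fun h => hS (by simp) h
  simp only [IsRowEnd]
  by_cases (s, t) ∈ S <;> by_cases (s + 1, t) ∈ S <;> simp_all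

theorem IsLowerSet.sum_outerCorner_sub_sum_innerCorner (hS : IsLowerSet S) {A C : ℕ}
    (hA : ∀ q ∈ S, q.1 < A) (hC : ∀ q ∈ S, q.2 < C) :
    ∑ q ∈ range A ×ˢ range C, (if IsOuterCorner S q then 1 else 0 : ℝ)
      - ∑ q ∈ range (A - 1) ×ˢ range (C - 1), (if IsInnerCorner S q then 1 else 0 : ℝ)
      = if (0, 0) ∈ S then 1 else 0 := by
  have hpad : ∑ q ∈ range (A - 1) ×ˢ range (C - 1), (if IsInnerCorner S q then 1 else 0 : ℝ)
      = ∑ q ∈ range A ×ˢ range C, (if IsInnerCorner S q then 1 else 0 : ℝ) := by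
    refine sum_subset (product_subset_product (by simp) (by simp)) fun q _ hq => if_neg ?_
    rintro ⟨-, h₁, h₂⟩
    have := hA _ h₁
    have := hC _ h₂
    simp only [mem_product, mem_range] at hq
    omega
  have hrow (s : ℕ) : ¬IsRowEnd S (s, C) := fun h => lt_irrefl C (hC _ h.1)
  rw [hpad, ← sum_sub_distrib, sum_product]
  calc ∑ s ∈ range A, ∑ t ∈ range C,
        ((if IsOuterCorner S (s, t) then 1 else 0) - if IsInnerCorner S (s, t) then 1 else 0 : ℝ)
      = ∑ s ∈ range A, (if IsRowEnd S (s, 0) then 1 else 0 : ℝ) := by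
        refine sum_congr rfl fun s _ => ?_
        simp only [hS.outerCorner_sub_innerCorner]
        rw [sum_range_sub' (fun t => if IsRowEnd S (s, t) then (1 : ℝ) else 0), if_neg (hrow s),
          sub_zero]
    _ = if (0, 0) ∈ S then 1 else 0 := by
        simp only [hS.rowEnd_eq]
        rw [sum_range_sub' (fun s => if (s, 0) ∈ S then (1 : ℝ) else 0),
          if_neg (show (A, 0) ∉ S from fun h => lt_irrefl A (hA _ h)), sub_zero]

end Grid

theorem canTogIn_iff_of_isMin {α : Type*} [PartialOrder α] {I : Finset α} {p : α}
    (hp : IsMin p) : CanTogIn I p ↔ p ∉ I :=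
  ⟨And.left, fun h => ⟨h, fun _ hq => (hp.not_lt hq).elim⟩⟩

namespace RootA

variable {n : ℕ}

def coords : RootA n ↪o ℕ × ℕ :=
  OrderEmbedding.ofMapLEIff (fun p => (p.1.1.val, p.1.2.val)) fun _ _ => Iff.rfl

theorem coords_apply (p : RootA n) : coords p = (p.1.1.val, p.1.2.val) := rfl

theorem mem_range_coords {q : ℕ × ℕ} :
    q ∈ Set.range (coords (n := n)) ↔
      1 ≤ q.1 ∧ 1 ≤ q.2 ∧ q.1 ≤ n ∧ q.2 ≤ n ∧ n + 1 ≤ q.1 + q.2 := by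
  constructor
  · rintro ⟨p, rfl⟩
    have := p.1.1.isLt
    have := p.1.2.isLt
    have := p.2
    simp only [coords_apply]
    omega
  · rintro ⟨h₁, h₂, h₃, h₄, h₅⟩
    exact ⟨⟨(⟨q.1, by omega⟩, ⟨q.2, by omega⟩), h₁, h₂, h₅⟩, rfl⟩

def shiftedCoords (c : RootA n) (I : Finset (RootA n)) : Set (ℕ × ℕ) :=
  {q | ∃ p ∈ I, coords p = coords c + q}

variable {I : Finset (RootA n)} {c p : RootA n} {q : ℕ × ℕ}

theorem mem_shiftedCoords_iff (h : coords p = coords c + q) :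
    q ∈ shiftedCoords c I ↔ p ∈ I :=
  ⟨fun ⟨_, hp', h'⟩ => coords.injective (h'.trans h.symm) ▸ hp', fun hp => ⟨p, hp, h⟩⟩

theorem exists_coords_eq_add_of_le (h : coords c + q ≤ coords p) :
    ∃ p' : RootA n, coords p' = coords c + q := by
  obtain ⟨hc₁, hc₂, -, -, hc₅⟩ := mem_range_coords.1 (Set.mem_range_self c)
  obtain ⟨-, -, hp₃, hp₄, -⟩ := mem_range_coords.1 (Set.mem_range_self p)
  rw [Prod.le_def, Prod.fst_add, Prod.snd_add] at h
  exact mem_range_coords.2 (by simp only [Prod.fst_add, Prod.snd_add]; omega)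

theorem isLowerSet_shiftedCoords (hI : IsIdeal I) : IsLowerSet (shiftedCoords c I) := by
  rintro q q' hle ⟨p, hp, hpq⟩
  have hle' : coords c + q' ≤ coords p := hpq ▸ add_le_add_right hle _
  obtain ⟨p', hp'⟩ := exists_coords_eq_add_of_le hle'
  exact ⟨p', hI (coords.le_iff_le.1 (hp' ▸ hle')) hp, hp'⟩

theorem lt_of_mem_shiftedCoords (hq : q ∈ shiftedCoords c I) :
    q.1 < n + 1 - (coords c).1 ∧ q.2 < n + 1 - (coords c).2 := by
  obtain ⟨p, -, hpq⟩ := hq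
  obtain ⟨-, -, hp₃, hp₄, -⟩ := mem_range_coords.1 (Set.mem_range_self p)
  rw [hpq, Prod.fst_add, Prod.snd_add] at *
  omega

theorem canTogOut_iff_isOuterCorner (hI : IsIdeal I) (h : coords p = coords c + q) :
    CanTogOut I p ↔ IsOuterCorner (shiftedCoords c I) q := by
  rw [CanTogOut, IsOuterCorner, ← (isLowerSet_shiftedCoords hI).forall_gt_notMem_iff,
    mem_shiftedCoords_iff h]
  refine and_congr_right fun _ => ⟨fun hmax q' hlt ⟨p', hp', h'⟩ => ?_, fun hmax p' hlt hp' => ?_⟩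
  · exact hmax p' (coords.lt_iff_lt.1 (h' ▸ h ▸ add_lt_add_right hlt _)) hp'
  · have hlt' : coords c + q < coords p' := h ▸ coords.lt_iff_lt.2 hlt
    have hle : coords c ≤ coords p' := (le_add_right le_rfl).trans hlt'.le
    refine hmax (coords p' - coords c) ?_ ⟨p', hp', (add_tsub_cancel_of_le hle).symm⟩
    exact lt_of_add_lt_add_left (a := coords c) (by rwa [add_tsub_cancel_of_le hle])

theorem canTogIn_iff_isInnerCorner (hI : IsIdeal I)
    (h : coords p = coords c + (q.1 + 1, q.2 + 1)) :
    CanTogIn I p ↔ IsInnerCorner (shiftedCoords c I) q := by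
  rw [CanTogIn, IsInnerCorner, mem_shiftedCoords_iff h]
  have hbelow (r : ℕ × ℕ) (hr : coords c + r < coords p) (hmin : ∀ p' < p, p' ∈ I) :
      r ∈ shiftedCoords c I := by
    obtain ⟨p', hp'⟩ := exists_coords_eq_add_of_le hr.le
    exact ⟨p', hmin p' (coords.lt_iff_lt.1 (hp' ▸ hr)), hp'⟩
  refine and_congr_right fun _ => ⟨fun hmin => ⟨hbelow _ ?_ hmin, hbelow _ ?_ hmin⟩, ?_⟩
  · rw [h, Prod.lt_iff]
    simp
  · rw [h, Prod.lt_iff]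
    simp
  · rintro ⟨⟨p₁, hp₁, h₁⟩, ⟨p₂, hp₂, h₂⟩⟩ p' hlt
    rw [← coords.lt_iff_lt, Prod.lt_iff_succ_le_or_succ_le, h] at hlt
    simp only [Prod.ext_iff, Prod.fst_add, Prod.snd_add] at h₁ h₂
    rcases hlt with hle | hle
    · refine hI (coords.le_iff_le.1 ?_) hp₂
      simp only [Prod.le_def, Prod.fst_add, Prod.snd_add] at hle ⊢
      omega
    · refine hI (coords.le_iff_le.1 ?_) hp₁
      simp only [Prod.le_def, Prod.fst_add, Prod.snd_add] at hle ⊢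
      omega

theorem isMin_of_coords_add_eq (h : (coords p).1 + (coords p).2 = n + 1) : IsMin p := by
  intro q hq
  have hq' := coords.le_iff_le.2 hq
  obtain ⟨-, -, -, -, hq₅⟩ := mem_range_coords.1 (Set.mem_range_self q)
  rw [Prod.le_def] at hq'
  exact coords.le_iff_le.1 (Prod.le_def.2 (by omega))

theorem sum_filter_le_coords {M : Type*} [AddCommMonoid M] (d : ℕ × ℕ)
    (hd : 1 ≤ d.1 ∧ 1 ≤ d.2 ∧ n + 1 ≤ d.1 + d.2) (f : ℕ × ℕ → M) :
    ∑ p ∈ univ.filter (fun p : RootA n => d ≤ coords p), f (coords p - d)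
      = ∑ q ∈ range (n + 1 - d.1) ×ˢ range (n + 1 - d.2), f q := by
  refine sum_bij (fun p _ => coords p - d) (fun p hp => ?_) (fun p₁ hp₁ p₂ hp₂ h => ?_)
    (fun q hq => ?_) fun _ _ => rfl
  · have := mem_range_coords.1 (Set.mem_range_self p)
    simp only [mem_filter, mem_univ, true_and, Prod.le_def] at hp
    simp only [mem_product, mem_range, Prod.fst_sub, Prod.snd_sub]
    omega
  · simp only [mem_filter, mem_univ, true_and] at hp₁ hp₂
    have := congrArg (· + d) h
    simp only [tsub_add_cancel_of_le hp₁, tsub_add_cancel_of_le hp₂] at this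
    exact coords.injective this
  · simp only [mem_product, mem_range] at hq
    obtain ⟨p, hp⟩ : d + q ∈ Set.range (coords (n := n)) :=
      mem_range_coords.2 (by simp only [Prod.fst_add, Prod.snd_add]; omega)
    exact ⟨p, mem_filter.2 ⟨mem_univ _, hp ▸ le_self_add⟩, by rw [hp, add_tsub_cancel_left]⟩

theorem sum_tout_eq_sum_isOuterCorner (hI : IsIdeal I) :
    ∑ p ∈ univ.filter (fun p => coords c ≤ coords p), Tout p I
      = ∑ q ∈ range (n + 1 - (coords c).1) ×ˢ range (n + 1 - (coords c).2),
          if IsOuterCorner (shiftedCoords c I) q then 1 else 0 := by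
  obtain ⟨h₁, h₂, -, -, h₅⟩ := mem_range_coords.1 (Set.mem_range_self c)
  rw [← sum_filter_le_coords _ ⟨h₁, h₂, h₅⟩]
  refine sum_congr rfl fun p hp => ?_
  rw [mem_filter] at hp
  exact if_congr (canTogOut_iff_isOuterCorner hI (add_tsub_cancel_of_le hp.2).symm) rfl rfl

theorem sum_tin_eq_sum_isInnerCorner (hI : IsIdeal I) :
    ∑ p ∈ univ.filter (fun p => coords c + (1, 1) ≤ coords p), Tin p I
      = ∑ q ∈ range (n + 1 - (coords c).1 - 1) ×ˢ range (n + 1 - (coords c).2 - 1),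
          if IsInnerCorner (shiftedCoords c I) q then 1 else 0 := by
  obtain ⟨h₁, h₂, -, -, h₅⟩ := mem_range_coords.1 (Set.mem_range_self c)
  rw [Nat.sub_sub, Nat.sub_sub]
  refine (sum_congr rfl fun p hp => ?_).trans
    (sum_filter_le_coords (coords c + (1, 1)) (by simp only [Prod.fst_add, Prod.snd_add]; omega) _)
  rw [mem_filter, Prod.le_def, Prod.fst_add, Prod.snd_add] at hp
  refine if_congr (canTogIn_iff_isInnerCorner hI ?_) rfl rfl
  simp only [Prod.ext_iff, Prod.fst_add, Prod.snd_add, Prod.fst_sub, Prod.snd_sub]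
  omega

theorem rook_eq_one (hI : IsIdeal I) (hc : (coords c).1 + (coords c).2 = n + 1) :
    Tin c I + ∑ p ∈ univ.filter (fun p => coords c ≤ coords p), Tout p I
      - ∑ p ∈ univ.filter (fun p => coords c + (1, 1) ≤ coords p), Tin p I = 1 := by
  have hS := isLowerSet_shiftedCoords (c := c) hI
  have hc₀ : ((0, 0) : ℕ × ℕ) ∈ shiftedCoords c I ↔ c ∈ I :=
    mem_shiftedCoords_iff (add_zero _).symm
  rw [add_sub_assoc, sum_tout_eq_sum_isOuterCorner hI, sum_tin_eq_sum_isInnerCorner hI,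
    hS.sum_outerCorner_sub_sum_innerCorner (fun _ hq => (lt_of_mem_shiftedCoords hq).1)
      (fun _ hq => (lt_of_mem_shiftedCoords hq).2),
    Tin, if_congr (canTogIn_iff_of_isMin (isMin_of_coords_add_eq hc)) rfl rfl,
    if_congr hc₀ rfl rfl]
  split_ifs <;> norm_num

end RootA

/-- On the Type `A_n` root poset, the rook statistic `R_i` equals `1` on every order ideal. -/
theorem rootA_rook_eq_one (n i : ℕ) (hi1 : 1 ≤ i) (hi2 : i ≤ n)
    (I : Finset (RootA n)) (hI : IsIdeal I) :
    Tin (⟨(⟨i, by omega⟩, ⟨n + 1 - i, by omega⟩), by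
        refine ⟨?_, ?_, ?_⟩ <;> simp <;> omega⟩ : RootA n) I
      + (∑ p ∈ univ.filter (fun p : RootA n =>
            i ≤ p.1.1.val ∧ n + 1 - i ≤ p.1.2.val), Tout p I)
      - (∑ p ∈ univ.filter (fun p : RootA n =>
            i < p.1.1.val ∧ n + 1 - i < p.1.2.val), Tin p I) = 1 := by
  set c : RootA n := ⟨(⟨i, by omega⟩, ⟨n + 1 - i, by omega⟩), by
    refine ⟨?_, ?_, ?_⟩ <;> simp <;> omega⟩
  have hc : RootA.coords c = (i, n + 1 - i) := rfl
  convert RootA.rook_eq_one hI (c := c) (by rw [hc]; omega) using 4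
  · ext p
    simp [hc, RootA.coords_apply, Prod.le_def]
  · rw [hc, RootA.coords_apply, Prod.le_def, Prod.mk_add_mk]
    omega
end
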